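/- For any tight finite EG program Γ, an interpretation I is a stable model of Γ if and only if I is contained in the vocabulary of Γ and I satisfies the completion of Γ. -/

import Mathlib

namespace EG


/-! ### Relation symbols -/

inductive Rel : Type where
  | req | rne | rlt | rle | rgt | rge

/-- Evaluation of a relation symbol relative to a strict total order `lt`
on the domain (equality is genuine equality of domain elements). -/
def Rel.eval {α : Type} (lt : α → α → Prop) : Rel → α → α → Prop
  | .req, a, b => a = b
  | .rne, a, b => a ≠ b
  | .rlt, a, b => lt a b
  | .rle, a, b => lt a b ∨ a = b
  | .rgt, a, b => lt b a
  | .rge, a, b => lt b a ∨ a = b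

/-! ### Precomputed terms -/

/-- Precomputed terms over a type `C` of symbolic constants:
numerals, symbolic constants, `inf`, `sup`, and applications of a symbolic
constant to a tuple of precomputed terms. -/
inductive Pre (C : Type) : Type where
  | inf
  | sup
  | num (n : ℤ)
  | sym (c : C)
  | app (f : C) (args : List (Pre C))

/-- The assumed total order on precomputed terms: a strict total order with
`inf` least, `sup` greatest, in which numerals are ordered as the integers. -/
structure PreOrderOK {C : Type} (lt : Pre C → Pre C → Prop) : Prop where
  irrefl : ∀ a, ¬ lt a a
  trans : ∀ a b c, lt a b → lt b c → lt a c
  total : ∀ a b, lt a b ∨ a = b ∨ lt b a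
  inf_least : ∀ a, a ≠ Pre.inf → lt Pre.inf a
  sup_greatest : ∀ a, a ≠ Pre.sup → lt a Pre.sup
  num_iff : ∀ m n : ℤ, (lt (Pre.num m) (Pre.num n) ↔ m < n)

/-- Atoms `p(r)` where `r` is a tuple of precomputed terms. -/
abbrev EGAtom (C : Type) := C × List (Pre C)

/-- An interpretation is a set of atoms over precomputed terms. -/
abbrev Interp (C : Type) := Set (EGAtom C)

/-- Valuations: variables (natural numbers) ↦ precomputed terms. -/
abbrev Val (C : Type) := ℕ → Pre C

/-- Simultaneously update a valuation on a list of variables by a list of values. -/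
def updList {C : Type} : Val C → List ℕ → List (Pre C) → Val C
  | v, [], _ => v
  | v, _ :: _, [] => v
  | v, x :: xs, r :: rs => Function.update (updList v xs rs) x r

/-! ### Terms -/

/-- Terms over symbolic constants `C` and operation names `O`. -/
inductive Term (C O : Type) : Type where
  | num (n : ℤ)
  | sym (c : C)
  | var (x : ℕ)
  | inf
  | sup
  | app (f : C) (ts : List (Term C O))
  | op (o : O) (ts : List (Term C O))
  | interval (t₁ t₂ : Term C O)

mutual
/-- The list of variables occurring in a term. -/
def Term.varList {C O : Type} : Term C O → List ℕ
  | .num _ => []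
  | .sym _ => []
  | .var x => [x]
  | .inf => []
  | .sup => []
  | .app _ ts => Term.varListL ts
  | .op _ ts => Term.varListL ts
  | .interval t₁ t₂ => t₁.varList ++ t₂.varList

def Term.varListL {C O : Type} : List (Term C O) → List ℕ
  | [] => []
  | t :: ts => t.varList ++ Term.varListL ts
end

/-- A term (or tuple of terms, etc.) is ground if it contains no variables. -/
def Term.Ground {C O : Type} (t : Term C O) : Prop := t.varList = []

mutual
/-- The set of values of a term under a valuation `v` (for a ground term this
is the set `[t]` of its values, independent of `v`). `opFun` gives the partial
integer function denoted by each operation name. -/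
def Term.val {C O : Type} (opFun : O → List ℤ → Option ℤ) (v : Val C) :
    Term C O → Set (Pre C)
  | .num n => {Pre.num n}
  | .sym c => {Pre.sym c}
  | .var x => {v x}
  | .inf => {Pre.inf}
  | .sup => {Pre.sup}
  | .app f ts => {r | ∃ rs : List (Pre C), Term.vals opFun v ts rs ∧ r = Pre.app f rs}
  | .op o ts => {r | ∃ ks : List ℤ, Term.vals opFun v ts (ks.map Pre.num) ∧
      ∃ m : ℤ, opFun o ks = some m ∧ r = Pre.num m}
  | .interval t₁ t₂ => {r | ∃ k₁ k₂ m : ℤ, Pre.num k₁ ∈ Term.val opFun v t₁ ∧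
      Pre.num k₂ ∈ Term.val opFun v t₂ ∧ k₁ ≤ m ∧ m ≤ k₂ ∧ r = Pre.num m}

/-- `Term.vals opFun v ts rs` : the tuple `rs` of precomputed terms is a tuple of
values of the tuple `ts` of terms (componentwise). -/
def Term.vals {C O : Type} (opFun : O → List ℤ → Option ℤ) (v : Val C) :
    List (Term C O) → List (Pre C) → Prop
  | [], rs => rs = []
  | t :: ts, rs => ∃ r rs', rs = r :: rs' ∧ r ∈ Term.val opFun v t ∧ Term.vals opFun v ts rs'
end

mutual
/-- Embedding of precomputed terms into terms. -/
def Pre.toTerm {C O : Type} : Pre C → Term C O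
  | .inf => .inf
  | .sup => .sup
  | .num n => .num n
  | .sym c => .sym c
  | .app f rs => .app f (Pre.toTermL rs)

def Pre.toTermL {C O : Type} : List (Pre C) → List (Term C O)
  | [] => []
  | r :: rs => Pre.toTerm r :: Pre.toTermL rs
end


/-! ### Formulas with aggregates -/

mutual
/-- Arguments of the extended (aggregate) language. -/
inductive AArg (C O A : Type) : Type where
  | num (n : ℤ)
  | sym (c : C)
  | var (x : ℕ)
  | inf
  | sup
  | app (f : C) (args : List (AArg C O A))
  | agg (a : A) (xs : List ℕ) (F : AFml C O A)

/-- Formulas of the extended (aggregate) first-order language over the domain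
of precomputed terms. -/
inductive AFml (C O A : Type) : Type where
  | atom (p : C) (args : List (AArg C O A))
  | cmp (rel : Rel) (a₁ a₂ : AArg C O A)
  | mem (a : AArg C O A) (t : Term C O)
  | bot
  | impl (F G : AFml C O A)
  | all (x : ℕ) (F : AFml C O A)
end

section Sem
variable {C O A : Type}
variable (opFun : O → List ℤ → Option ℤ)
variable (aggFun : A → Set (List (Pre C)) → Pre C)
variable (lt : Pre C → Pre C → Prop)

mutual
/-- The precomputed term denoted by an argument (joint recursion with `AFml.sat`). -/
def AArg.eval (I : Interp C) : Val C → AArg C O A → Pre C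
  | _, .num n => Pre.num n
  | _, .sym c => Pre.sym c
  | v, .var x => v x
  | _, .inf => Pre.inf
  | _, .sup => Pre.sup
  | v, .app f args => Pre.app f (AArg.evalL I v args)
  | v, .agg a xs F => aggFun a
      {rs : List (Pre C) | rs.length = xs.length ∧ AFml.sat I (updList v xs rs) F}

def AArg.evalL (I : Interp C) : Val C → List (AArg C O A) → List (Pre C)
  | _, [] => []
  | v, a :: as => AArg.eval I v a :: AArg.evalL I v as

/-- Satisfaction of a formula by an interpretation `I` under a valuation `v`. -/
def AFml.sat (I : Interp C) : Val C → AFml C O A → Prop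
  | v, .atom p args => (p, AArg.evalL I v args) ∈ I
  | v, .cmp rel a₁ a₂ => Rel.eval lt rel (AArg.eval I v a₁) (AArg.eval I v a₂)
  | v, .mem a t => AArg.eval I v a ∈ Term.val opFun v t
  | _, .bot => False
  | v, .impl F G => AFml.sat I v F → AFml.sat I v G
  | v, .all x F => ∀ r : Pre C, AFml.sat I (Function.update v x r) F
end

end Sem
/-! ### Infinitary propositional formulas -/

/-- Infinitary propositional formulas over a type `α` of atoms: atoms, `⊥`,
conjunctions and disjunctions of arbitrary families of formulas, implication. -/
inductive IForm (α : Type) : Type 1 where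
  | atom (a : α)
  | bot
  | conj (ι : Type) (f : ι → IForm α)
  | disj (ι : Type) (f : ι → IForm α)
  | impl (F G : IForm α)

namespace IForm

variable {α : Type}

/-- `⊤` as the empty conjunction. -/
def top : IForm α := conj Empty (fun e => e.elim)
def neg (F : IForm α) : IForm α := impl F bot
def and (F G : IForm α) : IForm α := conj Bool (fun b => cond b F G)
def or (F G : IForm α) : IForm α := disj Bool (fun b => cond b F G)
def conjList (l : List (IForm α)) : IForm α := conj (Fin l.length) (fun i => l.get i)

/-- Classical satisfaction of infinitary formulas. -/
def sat (I : Set α) : IForm α → Prop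
  | atom a => a ∈ I
  | bot => False
  | conj _ f => ∀ i, sat I (f i)
  | disj _ f => ∃ i, sat I (f i)
  | impl F G => sat I F → sat I G

open Classical in
/-- The Ferraris reduct of an infinitary formula relative to an interpretation:
every (maximal) subformula not satisfied by `I` is replaced by `⊥`. -/
noncomputable def reduct (I : Set α) : IForm α → IForm α
  | atom a => if a ∈ I then atom a else bot
  | bot => bot
  | conj ι f => conj ι (fun i => reduct I (f i))
  | disj ι f => disj ι (fun i => reduct I (f i))
  | impl F G => if sat I (impl F G) then impl (reduct I F) (reduct I G) else bot

/-- `I` is a stable model of `F` (Ferraris semantics for infinitary formulas):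
`I` is a minimal model of the reduct `F^I`. -/
def stable (I : Set α) (F : IForm α) : Prop :=
  sat I (reduct I F) ∧ ∀ J : Set α, J ⊆ I → sat J (reduct I F) → J = I

/-- Satisfaction in the infinitary logic of here-and-there `HT^∞`, for an
HT-interpretation given by `J ⊆ I` ("here" `J`, "there" `I`). -/
def satHT (J I : Set α) : IForm α → Prop
  | atom a => a ∈ J
  | bot => False
  | conj _ f => ∀ i, satHT J I (f i)
  | disj _ f => ∃ i, satHT J I (f i)
  | impl F G => (satHT J I F → satHT J I G) ∧ (sat I F → sat I G)

/-- Strong equivalence of infinitary formulas, i.e. equivalence in `HT^∞`. -/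
def HTEquiv (F G : IForm α) : Prop :=
  ∀ J I : Set α, J ⊆ I → (satHT J I F ↔ satHT J I G) ∧ (sat I F ↔ sat I G)

mutual
/-- Positive nonnegated atoms of an infinitary formula. -/
def Pnn : IForm α → Set α
  | atom a => {a}
  | bot => ∅
  | conj _ f => ⋃ i, Pnn (f i)
  | disj _ f => ⋃ i, Pnn (f i)
  | impl _ bot => ∅
  | impl G H => Nnn G ∪ Pnn H

/-- Negative nonnegated atoms of an infinitary formula. -/
def Nnn : IForm α → Set α
  | atom _ => ∅
  | bot => ∅
  | conj _ f => ⋃ i, Nnn (f i)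
  | disj _ f => ⋃ i, Nnn (f i)
  | impl _ bot => ∅
  | impl G H => Pnn G ∪ Nnn H
end

end IForm

/-! ### Infinitary programs -/

/-- An infinitary rule `F → A`. -/
structure IRule (α : Type) : Type 1 where
  body : IForm α
  head : α

/-- An infinitary program: a conjunction (represented as a set) of infinitary rules. -/
abbrev IProg (α : Type) := Set (IRule α)

def IRule.toForm {α : Type} (r : IRule α) : IForm α := .impl r.body (.atom r.head)

namespace IProg
variable {α : Type}

/-- `I` satisfies the program (i.e., the conjunction of its rules). -/
def sat (I : Set α) (P : IProg α) : Prop := ∀ r ∈ P, IForm.sat I r.toForm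

/-- `I` is a stable model of the program, i.e., of the conjunction of its rules:
`I` is a minimal model of the reduct of that conjunction. -/
def stable (I : Set α) (P : IProg α) : Prop :=
  (∀ r ∈ P, IForm.sat I (IForm.reduct I r.toForm)) ∧
  ∀ J : Set α, J ⊆ I → (∀ r ∈ P, IForm.sat J (IForm.reduct I r.toForm)) → J = I

/-- `I` is supported by the program. -/
def supported (I : Set α) (P : IProg α) : Prop :=
  ∀ a ∈ I, ∃ r ∈ P, r.head = a ∧ IForm.sat I r.body

/-- `I` satisfies the completion of `P`, with signature (set of atoms) `S`:
the conjunction over all atoms `A ∈ S` of `A ↔ ⋁ (P|_A)`. -/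
def satCompletionOn (S : Set α) (I : Set α) (P : IProg α) : Prop :=
  ∀ a ∈ S, (a ∈ I ↔ ∃ r ∈ P, r.head = a ∧ IForm.sat I r.body)

/-- `B` is a parent of `A` relative to `P` and `I`. -/
def parent (P : IProg α) (I : Set α) (B A : α) : Prop :=
  A ∈ I ∧ B ∈ I ∧ ∃ r ∈ P, r.head = A ∧ IForm.sat I r.body ∧ B ∈ IForm.Pnn r.body

/-- `P` is tight on `I`: there is no infinite sequence of elements of `I` in
which each element is followed by one of its parents. -/
def tightOn (P : IProg α) (I : Set α) : Prop :=
  ¬ ∃ f : ℕ → α, (∀ i, f i ∈ I) ∧ ∀ i, parent P I (f (i + 1)) (f i)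

end IProg
/-! ### Programs -/

/-- A literal: an atom `p(t₁,…,tₙ)` (`pos = true`) or such an atom preceded
by `not` (`pos = false`). -/
structure Lit (C O : Type) : Type where
  pos : Bool
  pred : C
  args : List (Term C O)

/-- A comparison `t₁ ≺ t₂`. -/
structure Comp (C O : Type) : Type where
  rel : Rel
  lhs : Term C O
  rhs : Term C O

/-- An element of the condition of an aggregate expression: a literal or comparison. -/
abbrev CondElem (C O : Type) := Lit C O ⊕ Comp C O

def Lit.varList {C O : Type} (l : Lit C O) : List ℕ := Term.varListL l.args
def Comp.varList {C O : Type} (c : Comp C O) : List ℕ := c.lhs.varList ++ c.rhs.varList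
def CondElem.varList {C O : Type} : CondElem C O → List ℕ :=
  Sum.elim Lit.varList Comp.varList

/-- An aggregate expression `α{t : C} ≺ s`, where `s` is a variable or a
precomputed term. -/
structure AggExpr (C O A : Type) : Type where
  name : A
  ts : List (Term C O)
  cond : List (CondElem C O)
  rel : Rel
  bound : ℕ ⊕ Pre C

def AggExpr.lhsVarList {C O A : Type} (E : AggExpr C O A) : List ℕ :=
  Term.varListL E.ts ++ E.cond.flatMap CondElem.varList

def boundVarList {C : Type} : ℕ ⊕ Pre C → List ℕ
  | .inl x => [x]
  | .inr _ => []

def AggExpr.varList {C O A : Type} (E : AggExpr C O A) : List ℕ :=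
  E.lhsVarList ++ boundVarList E.bound

/-- An aggregate expression is closed if its bound `s` is ground
(i.e., a precomputed term). -/
def AggExpr.ClosedBound {C O A : Type} (E : AggExpr C O A) : Prop :=
  ∃ r : Pre C, E.bound = Sum.inr r

/-- A conjunctive term of a rule body. -/
inductive BElem (C O A : Type) : Type where
  | lit (l : Lit C O)
  | comp (c : Comp C O)
  | agg (E : AggExpr C O A)

def BElem.varList {C O A : Type} : BElem C O A → List ℕ
  | .lit l => l.varList
  | .comp c => c.varList
  | .agg E => E.varList

/-- A body element suitable for the translation `τ`: a ground literal,
a ground comparison, or a closed aggregate expression. -/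
def BElem.ClosedC {C O A : Type} : BElem C O A → Prop
  | .lit l => l.varList = []
  | .comp c => c.varList = []
  | .agg E => E.ClosedBound

/-- The head of a rule. -/
inductive Head (C O : Type) : Type where
  | basic (p : C) (ts : List (Term C O))
  | choice (p : C) (ts : List (Term C O))
  | empty

def Head.varList {C O : Type} : Head C O → List ℕ
  | .basic _ ts => Term.varListL ts
  | .choice _ ts => Term.varListL ts
  | .empty => []

/-- A rule `Head ← Body`. -/
structure Rule (C O A : Type) : Type where
  head : Head C O
  body : List (BElem C O A)

def Rule.varList {C O A : Type} (R : Rule C O A) : List ℕ :=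
  R.head.varList ++ R.body.flatMap BElem.varList

/-- The variables with an occurrence in the rule outside the left-hand sides
`α{t : C}` of aggregate expressions (head, literal and comparison conjuncts,
and bounds of aggregate expressions); these are the global variables. -/
def Rule.globalList {C O A : Type} (R : Rule C O A) : List ℕ :=
  (R.head.varList ++ R.body.flatMap (fun b =>
    match b with
    | .lit l => l.varList
    | .comp c => c.varList
    | .agg E => boundVarList E.bound)).dedup

/-- The local variables of a rule: those occurring in the rule, all of whose
occurrences are inside left-hand sides of aggregate expressions of its body. -/
def Rule.localList {C O A : Type} (R : Rule C O A) : List ℕ :=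
  ((R.body.flatMap (fun b =>
    match b with
    | .agg E => E.lhsVarList
    | _ => [])).dedup).filter (fun x => x ∉ R.globalList)

/-- A rule is closed if all its variables are local. -/
def Rule.Closed {C O A : Type} (R : Rule C O A) : Prop := R.globalList = []

/-! ### Predicate symbol occurrences, vocabulary, dependency graph -/

def Lit.hasPred {C O : Type} (p : C) (n : ℕ) (l : Lit C O) : Prop :=
  l.pred = p ∧ l.args.length = n

def CondElem.hasPred {C O : Type} (p : C) (n : ℕ) : CondElem C O → Prop
  | .inl l => l.hasPred p n
  | .inr _ => False

def AggExpr.hasPred {C O A : Type} (p : C) (n : ℕ) (E : AggExpr C O A) : Prop :=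
  ∃ ce ∈ E.cond, CondElem.hasPred p n ce

/-- The predicate symbol `p/n` occurs in a body element. -/
def BElem.hasPred {C O A : Type} (p : C) (n : ℕ) : BElem C O A → Prop
  | .lit l => l.hasPred p n
  | .comp _ => False
  | .agg E => E.hasPred p n

/-- The predicate symbol `p/n` occurs in a positive literal or in an aggregate
expression (condition (ii′)). -/
def BElem.hasPosOrAggPred {C O A : Type} (p : C) (n : ℕ) : BElem C O A → Prop
  | .lit l => l.pos = true ∧ l.hasPred p n
  | .comp _ => False
  | .agg E => E.hasPred p n

def Head.hasPred {C O : Type} (p : C) (n : ℕ) : Head C O → Prop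
  | .basic q ts => q = p ∧ ts.length = n
  | .choice q ts => q = p ∧ ts.length = n
  | .empty => False

/-- The predicate symbol `p/n` occurs in the rule `R`. -/
def Rule.hasPredSym {C O A : Type} (p : C) (n : ℕ) (R : Rule C O A) : Prop :=
  R.head.hasPred p n ∨ ∃ e ∈ R.body, BElem.hasPred p n e

/-- The vocabulary of a program: all atoms `p(r)` with `r` a tuple of `n`
precomputed terms and `p/n` occurring in the program. -/
def vocab {C O A : Type} (Γ : Set (Rule C O A)) : Set (EGAtom C) :=
  {a | ∃ R ∈ Γ, Rule.hasPredSym a.1 a.2.length R}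

/-- The edge relation of the dependency graph `G_Γ` on predicate symbols. -/
def DepEdge {C O A : Type} (Γ : Set (Rule C O A)) (q p : C × ℕ) : Prop :=
  ∃ R ∈ Γ, R.head.hasPred q.1 q.2 ∧ ∃ e ∈ R.body, BElem.hasPosOrAggPred p.1 p.2 e

/-- A program is tight if its dependency graph is acyclic. -/
def EGTight {C O A : Type} (Γ : Set (Rule C O A)) : Prop :=
  ∀ s : C × ℕ, ¬ Relation.TransGen (DepEdge Γ) s s


/-! ### Embeddings and aggregate-freeness -/

mutual
/-- Embedding of precomputed terms into arguments of the extended language. -/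
def Pre.toAArg {C O A : Type} : Pre C → AArg C O A
  | .inf => .inf
  | .sup => .sup
  | .num n => .num n
  | .sym c => .sym c
  | .app f rs => .app f (Pre.toAArgL rs)

def Pre.toAArgL {C O A : Type} : List (Pre C) → List (AArg C O A)
  | [] => []
  | r :: rs => Pre.toAArg r :: Pre.toAArgL rs
end

mutual
/-- The number of occurrences of aggregate names in an argument;
an argument is aggregate-free iff this is `0`. -/
def AArg.countAgg {C O A : Type} : AArg C O A → ℕ
  | .num _ => 0
  | .sym _ => 0
  | .var _ => 0
  | .inf => 0
  | .sup => 0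
  | .app _ args => AArg.countAggL args
  | .agg _ _ F => F.countAgg + 1

def AArg.countAggL {C O A : Type} : List (AArg C O A) → ℕ
  | [] => 0
  | a :: as => a.countAgg + AArg.countAggL as

def AFml.countAgg {C O A : Type} : AFml C O A → ℕ
  | .atom _ args => AArg.countAggL args
  | .cmp _ a₁ a₂ => a₁.countAgg + a₂.countAgg
  | .mem a _ => a.countAgg
  | .bot => 0
  | .impl F G => F.countAgg + G.countAgg
  | .all _ F => F.countAgg
end

/-- An argument contains no aggregate names. -/
def AArg.AggFree {C O A : Type} (a : AArg C O A) : Prop := a.countAgg = 0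

mutual
/-- An aggregate-free argument, viewed as a term (the `agg` case is junk and
is never relevant for aggregate-free arguments). -/
def AArg.toTerm {C O A : Type} : AArg C O A → Term C O
  | .num n => .num n
  | .sym c => .sym c
  | .var x => .var x
  | .inf => .inf
  | .sup => .sup
  | .app f args => .app f (AArg.toTermL args)
  | .agg _ _ _ => .inf

def AArg.toTermL {C O A : Type} : List (AArg C O A) → List (Term C O)
  | [] => []
  | a :: as => a.toTerm :: AArg.toTermL as
end

/-! ### Abbreviated connectives of the extended first-order language -/

namespace AFml
variable {C O A : Type}

def negF (F : AFml C O A) : AFml C O A := .impl F .bot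
def topF : AFml C O A := negF .bot
def andF (F G : AFml C O A) : AFml C O A := .impl (.impl F (.impl G .bot)) .bot
def orF (F G : AFml C O A) : AFml C O A := .impl (negF F) G
def iffF (F G : AFml C O A) : AFml C O A := andF (.impl F G) (.impl G F)
def exF (x : ℕ) (F : AFml C O A) : AFml C O A := negF (.all x (negF F))
def andList (l : List (AFml C O A)) : AFml C O A := l.foldr andF topF
def orList (l : List (AFml C O A)) : AFml C O A := l.foldr orF .bot
def exList (xs : List ℕ) (F : AFml C O A) : AFml C O A := xs.foldr exF F
def allList (xs : List ℕ) (F : AFml C O A) : AFml C O A := xs.foldr .all F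

end AFml

/-! ### The translation φ (formula representations) -/

/-- A variable index strictly greater than every element of `l`
(used to pick new/fresh variables). -/
def freshVar (l : List ℕ) : ℕ := l.foldr max 0 + 1

/-- The bound `s` of an aggregate expression, as a term. -/
def boundTerm {C O : Type} : ℕ ⊕ Pre C → Term C O
  | .inl x => .var x
  | .inr r => r.toTerm

section Phi
variable {C O A : Type}

/-- `φ` of a literal: `∃X(X ∈ t ∧ p(X))`, resp. `∃X(X ∈ t ∧ ¬p(X))`,
with `X` a tuple of new variables. -/
def phiLit (l : Lit C O) : AFml C O A :=
  let n := freshVar l.varList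
  let ws := (List.range l.args.length).map (· + n)
  AFml.exList ws (AFml.andF
    (AFml.andList ((ws.zip l.args).map (fun q => AFml.mem (AArg.var q.1) q.2)))
    (if l.pos then AFml.atom l.pred (ws.map AArg.var)
     else AFml.negF (AFml.atom l.pred (ws.map AArg.var))))

/-- `φ` of a comparison: `∃X₁X₂(X₁ ∈ t₁ ∧ X₂ ∈ t₂ ∧ X₁ ≺ X₂)`. -/
def phiComp (c : Comp C O) : AFml C O A :=
  let n := freshVar c.varList
  AFml.exF n (AFml.exF (n + 1) (AFml.andF (AFml.mem (AArg.var n) c.lhs)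
    (AFml.andF (AFml.mem (AArg.var (n + 1)) c.rhs)
      (AFml.cmp c.rel (AArg.var n) (AArg.var (n + 1))))))

def phiCondElem : CondElem C O → AFml C O A :=
  Sum.elim phiLit phiComp

/-- `φ` of a conjunction of literals and comparisons. -/
def phiCond (cond : List (CondElem C O)) : AFml C O A :=
  AFml.andList (cond.map phiCondElem)

/-- `φ^X` of an aggregate expression `α{t : C} ≺ s` (with `X = xs` the
variables treated as local):
`∃Y(α{Z | ∃X(Z ∈ t ∧ φC)} ≺ Y ∧ Y ∈ s)`, with `Z`, `Y` new variables. -/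
def phiAgg (xs : List ℕ) (E : AggExpr C O A) : AFml C O A :=
  let n := freshVar (xs ++ E.varList)
  let zs := (List.range E.ts.length).map (· + (n + 1))
  AFml.exF n (AFml.andF
    (AFml.cmp E.rel
      (AArg.agg E.name zs
        (AFml.exList xs (AFml.andF
          (AFml.andList ((zs.zip E.ts).map (fun q => AFml.mem (AArg.var q.1) q.2)))
          (phiCond E.cond))))
      (AArg.var n))
    (AFml.mem (AArg.var n) (boundTerm E.bound)))

/-- `φ^X` of a body element, where `xs` is the list of variables treated as local. -/
def phiBElem (xs : List ℕ) : BElem C O A → AFml C O A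
  | .lit l => phiLit l
  | .comp c => phiComp c
  | .agg E => phiAgg xs E

/-- `φ^X` of a body (a conjunction of literals, comparisons and aggregate
expressions), where `xs` is the list of variables treated as local. -/
def phiBody (xs : List ℕ) (b : List (BElem C O A)) : AFml C O A :=
  AFml.andList (b.map (phiBElem xs))

/-- The formula representation of a constraint `← Body`: `¬ φ^X(Body)`,
where `X` is the list of local variables of the constraint. -/
def phiConstraintRep (R : Rule C O A) : AFml C O A :=
  AFml.negF (phiBody R.localList R.body)

/-- `V ∈ t` for a tuple `V` of variables and a tuple `t` of terms. -/
def memConj (Vs : List ℕ) (ts : List (Term C O)) : AFml C O A :=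
  AFml.andList ((Vs.zip ts).map (fun q => AFml.mem (AArg.var q.1) q.2))

/-- The antecedent `Fᵢ` of the formula representation `Fᵢ → p(V)` of a basic or
choice rule, where `Vs` is the chosen tuple `V` of new variables:
for a basic rule `V ∈ t ∧ φ^X(Body)`, for a choice rule
`V ∈ t ∧ φ^X(Body) ∧ p(V)`, with `X` the local variables of the rule. -/
def ruleAnte (Vs : List ℕ) (R : Rule C O A) : AFml C O A :=
  match R.head with
  | .basic _ ts => AFml.andF (memConj Vs ts) (phiBody R.localList R.body)
  | .choice p ts => AFml.andF (memConj Vs ts)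
      (AFml.andF (phiBody R.localList R.body) (AFml.atom p (Vs.map AArg.var)))
  | .empty => AFml.bot

/-- Does `R` belong to the definition of `p/n` (a basic or choice rule whose
head is of the form `p(t₁,…,tₙ)` or `{p(t₁,…,tₙ)}`)? -/
def definesB [DecidableEq C] (p : C) (n : ℕ) (R : Rule C O A) : Bool :=
  match R.head with
  | .basic q ts => decide (q = p ∧ ts.length = n)
  | .choice q ts => decide (q = p ∧ ts.length = n)
  | .empty => false

/-- The completed definition of the predicate symbol `p/n` in the finite
program `Γ`: `∀V(p(V) ↔ ⋁ᵢ ∃Uᵢ Fᵢ)`, where the `Fᵢ` come from the formula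
representations of the rules defining `p/n`, `V` is a tuple of new variables
chosen in the same way for all `i`, and `Uᵢ` is the list of free variables of
`Fᵢ` not in `V` (i.e., the global variables of the corresponding rule). -/
def completedDef [DecidableEq C] (Γ : List (Rule C O A)) (p : C) (n : ℕ) : AFml C O A :=
  let base := freshVar (Γ.flatMap Rule.varList)
  let Vs := (List.range n).map (· + base)
  AFml.allList Vs (AFml.iffF (AFml.atom p (Vs.map AArg.var))
    (AFml.orList ((Γ.filter (definesB p n)).map
      (fun R => AFml.exList R.globalList (ruleAnte Vs R)))))

end Phi

/-! ### The translation τ (grounding into infinitary formulas) -/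

section Tau
variable {C O A : Type}
variable (opFun : O → List ℤ → Option ℤ)
variable (aggFun : A → Set (List (Pre C)) → Pre C)
variable (lt : Pre C → Pre C → Prop)

/-- `τ` of a (ground instance of a) literal: `⋁_{r ∈ [t]} p(r)`, resp.
`⋁_{r ∈ [t]} ¬p(r)`; variables are evaluated by the valuation `v`. -/
def tauLit (v : Val C) (l : Lit C O) : IForm (EGAtom C) :=
  if l.pos then
    .disj {rs : List (Pre C) // Term.vals opFun v l.args rs}
      (fun rs => .atom (l.pred, rs.val))
  else
    .disj {rs : List (Pre C) // Term.vals opFun v l.args rs}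
      (fun rs => .neg (.atom (l.pred, rs.val)))

open Classical in
/-- `τ` of a (ground instance of a) comparison: `⊤` if the relation holds
between some values of the two terms, `⊥` otherwise. -/
noncomputable def tauComp (v : Val C) (c : Comp C O) : IForm (EGAtom C) :=
  if ∃ r₁ ∈ Term.val opFun v c.lhs, ∃ r₂ ∈ Term.val opFun v c.rhs,
      Rel.eval lt c.rel r₁ r₂
  then .top else .bot

noncomputable def tauCondElem (v : Val C) : CondElem C O → IForm (EGAtom C)
  | .inl l => tauLit opFun v l
  | .inr c => tauComp opFun lt v c

/-- `τ` of a conjunction of (ground instances of) literals and comparisons. -/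
noncomputable def tauCond (v : Val C) (cond : List (CondElem C O)) : IForm (EGAtom C) :=
  IForm.conjList (cond.map (tauCondElem opFun lt v))

/-- The value of the bound `s` of an aggregate expression under a valuation. -/
def boundVal (v : Val C) : ℕ ⊕ Pre C → Pre C
  | .inl x => v x
  | .inr r => r

/-- Tuples of precomputed terms matching the variable list `xs`. -/
def AggTuple (C : Type) (xs : List ℕ) : Type := {rs : List (Pre C) // rs.length = xs.length}

/-- `Δ` justifies the aggregate expression `E` (relative to the valuation `v`
and the list `xs` of its variables): `≺` holds between `α̂([Δ])` and `s`,
where `[Δ]` is the union of the value sets of the instantiated tuples `t`. -/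
def Justifies (v : Val C) (xs : List ℕ) (E : AggExpr C O A)
    (Δ : Set (AggTuple C xs)) : Prop :=
  Rel.eval lt E.rel
    (aggFun E.name
      {q | ∃ rs ∈ Δ, Term.vals opFun (updList v xs rs.val) E.ts q})
    (boundVal v E.bound)

/-- `τ` of a closed aggregate expression `E`, relative to the list `xs` of its
variables: the conjunction, over all subsets `Δ` of the set `A` of tuples of
precomputed terms matching `xs` that do not justify `E`, of the implications
`(⋀_{r∈Δ} τ(C^X_r)) → (⋁_{r∈A∖Δ} τ(C^X_r))`. -/
noncomputable def tauAgg (v : Val C) (xs : List ℕ) (E : AggExpr C O A) :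
    IForm (EGAtom C) :=
  .conj {Δ : Set (AggTuple C xs) // ¬ Justifies opFun aggFun lt v xs E Δ}
    (fun Δ => .impl
      (.conj {rs : AggTuple C xs // rs ∈ Δ.val}
        (fun rs => tauCond opFun lt (updList v xs rs.val.val) E.cond))
      (.disj {rs : AggTuple C xs // rs ∉ Δ.val}
        (fun rs => tauCond opFun lt (updList v xs rs.val.val) E.cond)))

/-- `τ` of a closed aggregate expression, with `X` the list of variables
occurring in it. -/
noncomputable def tauAggE (v : Val C) (E : AggExpr C O A) : IForm (EGAtom C) :=
  tauAgg opFun aggFun lt v (E.varList.dedup) E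

/-- `τ` of a body element of (an instance of) a rule whose list of local
variables is `loc`; in the instance, the variables occurring in an aggregate
expression `E` are the variables of `E` that are local in the rule. -/
noncomputable def tauBElem (v : Val C) (loc : List ℕ) : BElem C O A → IForm (EGAtom C)
  | .lit l => tauLit opFun v l
  | .comp c => tauComp opFun lt v c
  | .agg E => tauAgg opFun aggFun lt v (E.varList.dedup.filter (· ∈ loc)) E

/-- `τ` of the body of (an instance of) a rule with local variable list `loc`. -/
noncomputable def tauBody (v : Val C) (loc : List ℕ) (b : List (BElem C O A)) :
    IForm (EGAtom C) :=
  IForm.conjList (b.map (tauBElem opFun aggFun lt v loc))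

/-- `τ` of (an instance, given by the valuation `v`, of) a rule. -/
noncomputable def tauRule (v : Val C) (R : Rule C O A) : IForm (EGAtom C) :=
  match R.head with
  | .basic p ts => .impl (tauBody opFun aggFun lt v R.localList R.body)
      (.conj {rs : List (Pre C) // Term.vals opFun v ts rs}
        (fun rs => .atom (p, rs.val)))
  | .choice p ts => .impl (tauBody opFun aggFun lt v R.localList R.body)
      (.conj {rs : List (Pre C) // Term.vals opFun v ts rs}
        (fun rs => .or (.atom (p, rs.val)) (.neg (.atom (p, rs.val)))))
  | .empty => .neg (tauBody opFun aggFun lt v R.localList R.body)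

/-- `τΓ`: the conjunction of `τR` over all instances `R` of the rules of `Γ`
(instances given by valuations of the global variables). -/
noncomputable def tauProg (Γ : Set (Rule C O A)) : IForm (EGAtom C) :=
  .conj ({R : Rule C O A // R ∈ Γ} × Val C)
    (fun z => tauRule opFun aggFun lt z.2 z.1.val)

/-- Stable models of an EG program: stable models of `τΓ`. -/
noncomputable def EGStable (I : Interp C) (Γ : Set (Rule C O A)) : Prop :=
  IForm.stable I (tauProg opFun aggFun lt Γ)

/-- The infinitary program `τ₁Γ`: the rules `τ(Body) → p(r)` for all instances
of basic rules of `Γ` and all `r ∈ [t]`, together with the rules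
`τ(Body) ∧ ¬¬p(r) → p(r)` for all instances of choice rules and all `r ∈ [t]`. -/
noncomputable def tau1 (Γ : Set (Rule C O A)) : IProg (EGAtom C) :=
  {ir | ∃ R ∈ Γ, ∃ v : Val C,
    (∃ p ts rs, R.head = Head.basic p ts ∧ Term.vals opFun v ts rs ∧
      ir = ⟨tauBody opFun aggFun lt v R.localList R.body, (p, rs)⟩) ∨
    (∃ p ts rs, R.head = Head.choice p ts ∧ Term.vals opFun v ts rs ∧
      ir = ⟨IForm.and (tauBody opFun aggFun lt v R.localList R.body)
              (IForm.neg (IForm.neg (IForm.atom (p, rs)))), (p, rs)⟩)}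

/-- The infinitary formula `τ₂Γ`: the conjunction of `¬τ(C)` over all
instances `← C` of the constraints of `Γ`. -/
noncomputable def tau2 (Γ : Set (Rule C O A)) : IForm (EGAtom C) :=
  .conj ({R : Rule C O A // R ∈ Γ ∧ R.head = Head.empty} × Val C)
    (fun z => .neg (tauBody opFun aggFun lt z.2 z.1.val.localList z.1.val.body))

/-- `τ` of a closed conjunction of ground literals, ground comparisons and
closed aggregate expressions (each aggregate expression translated relative
to the list of its own variables). -/
noncomputable def tauBElemC (v : Val C) : BElem C O A → IForm (EGAtom C)
  | .lit l => tauLit opFun v l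
  | .comp c => tauComp opFun lt v c
  | .agg E => tauAggE opFun aggFun lt v E

noncomputable def tauBodyC (v : Val C) (b : List (BElem C O A)) : IForm (EGAtom C) :=
  IForm.conjList (b.map (tauBElemC opFun aggFun lt v))

end Tau

/-! ### Completion of an EG program -/

section Completion
variable {C O A : Type}
variable (opFun : O → List ℤ → Option ℤ)
variable (aggFun : A → Set (List (Pre C)) → Pre C)
variable (lt : Pre C → Pre C → Prop)

/-- `I` satisfies the completion of the finite program `Γ`: the completed
definitions of all predicate symbols occurring in `Γ` together with the
universal closures of the formula representations of all constraints of `Γ`. -/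
def SatCompletion [DecidableEq C] (Γ : List (Rule C O A)) (I : Interp C) : Prop :=
  (∀ (p : C) (n : ℕ), (∃ R ∈ Γ, Rule.hasPredSym p n R) →
    ∀ v : Val C, AFml.sat opFun aggFun lt I v (completedDef Γ p n)) ∧
  (∀ R ∈ Γ, R.head = Head.empty →
    ∀ v : Val C, AFml.sat opFun aggFun lt I v (phiConstraintRep R))

end Completion

/-!
Under `τ`, a stable model of `Γ` is a model `I` of `τΓ` that is minimal for the reduct `(τΓ)^I`.
Minimality (tested on `I \ {a}`) forces every atom `a ∈ I` to be supported: it is the head of an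
instance of a basic or choice rule whose body is true in `I`. Conversely, for a tight program a
supported model is minimal (Fages): if `J ⊆ I` satisfies the reduct, induct along the acyclic
dependency graph, using that the reduct of a body stays true in `J` as soon as `J` contains the
atoms of `I` of its positive literals and aggregates.

On the other side, `φ` and `τ` agree: `φ(F)` holds under a valuation iff `τ` of the corresponding
instance of `F` is true. So the completed definition of `p/n` says that the instances of the
rules defining `p/n` are true and support every atom `p(r) ∈ I`, and the formula representations
of constraints say that the instances of constraints are true. For `I` within the vocabulary of
`Γ` this is exactly "`I ⊨ τΓ` and `I` is supported".
-/

namespace IForm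
variable {α : Type} {I J : Set α}

def atoms : IForm α → Set α
  | atom a => {a}
  | bot => ∅
  | conj _ f => ⋃ i, atoms (f i)
  | disj _ f => ⋃ i, atoms (f i)
  | impl F G => atoms F ∪ atoms G

theorem sat_congr {F : IForm α} (h : ∀ a ∈ atoms F, a ∈ I ↔ a ∈ J) :
    sat I F ↔ sat J F := by
  induction F with
  | atom a => exact h a rfl
  | bot => exact Iff.rfl
  | conj ι f ih => exact forall_congr' fun i => ih i fun a ha => h a (Set.mem_iUnion_of_mem i ha)
  | disj ι f ih => exact exists_congr fun i => ih i fun a ha => h a (Set.mem_iUnion_of_mem i ha)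
  | impl F G ihF ihG =>
      exact imp_congr (ihF fun a ha => h a (Or.inl ha)) (ihG fun a ha => h a (Or.inr ha))

theorem atoms_reduct_subset (I : Set α) (F : IForm α) : atoms (reduct I F) ⊆ atoms F := by
  induction F with
  | atom a => by_cases h : a ∈ I <;> simp [reduct, h, atoms]
  | bot => exact subset_rfl
  | conj ι f ih => exact Set.iUnion_mono ih
  | disj ι f ih => exact Set.iUnion_mono ih
  | impl F G ihF ihG =>
      by_cases h : sat I (impl F G)
      · simp only [reduct, if_pos h, atoms]
        exact Set.union_subset_union ihF ihG
      · simp [reduct, if_neg h, atoms]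

@[simp] theorem sat_reduct_self (F : IForm α) : sat I (reduct I F) ↔ sat I F := by
  induction F with
  | atom a => by_cases h : a ∈ I <;> simp [reduct, h, sat]
  | bot => exact Iff.rfl
  | conj ι f ih => exact forall_congr' ih
  | disj ι f ih => exact exists_congr ih
  | impl F G ihF ihG =>
      by_cases h : sat I (impl F G)
      · rw [reduct, if_pos h]
        exact imp_congr ihF ihG
      · rw [reduct, if_neg h]
        exact iff_of_false id h

theorem sat_of_sat_reduct {F : IForm α} (h : sat J (reduct I F)) : sat I F := by
  induction F with
  | atom a => by_cases ha : a ∈ I <;> simp_all [reduct, sat]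
  | bot => exact h
  | conj ι f ih => exact fun i => ih i (h i)
  | disj ι f ih => exact h.imp ih
  | impl F G =>
      by_cases hI : sat I (impl F G)
      · exact hI
      · rw [reduct, if_neg hI] at h
        exact h.elim

theorem sat_reduct_atom (hJI : J ⊆ I) (a : α) : sat J (reduct I (atom a)) ↔ a ∈ J := by
  by_cases ha : a ∈ I
  · simp only [reduct, if_pos ha]
    rfl
  · simp only [reduct, if_neg ha]
    exact iff_of_false id fun hJ => ha (hJI hJ)

theorem sat_reduct_neg (F : IForm α) : sat J (reduct I (neg F)) ↔ ¬ sat I F := by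
  by_cases hF : sat I F
  · rw [neg, reduct, if_neg fun h => h hF]
    exact iff_of_false id (not_not_intro hF)
  · rw [neg, reduct, if_pos (show sat I (impl F bot) from hF)]
    exact iff_of_true (fun h => hF (sat_of_sat_reduct h)) hF

theorem sat_reduct_impl {F G : IForm α} (h : sat I (impl F G)) :
    sat J (reduct I (impl F G)) ↔ (sat J (reduct I F) → sat J (reduct I G)) := by
  rw [reduct, if_pos h]
  rfl

theorem sat_reduct_iff_of_atoms (hJI : J ⊆ I) {F : IForm α}
    (h : ∀ a ∈ atoms F, a ∈ I → a ∈ J) : sat J (reduct I F) ↔ sat I F := by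
  rw [← sat_reduct_self F]
  exact sat_congr fun a ha => ⟨fun hJ => hJI hJ, h a (atoms_reduct_subset I F ha)⟩

theorem stable.subset_atoms {F : IForm α} (h : stable I F) : I ⊆ atoms F := by
  have hsat : sat (I ∩ atoms F) (reduct I F) :=
    (sat_congr fun a ha =>
      ⟨fun hI => Set.mem_inter hI (atoms_reduct_subset I F ha), And.left⟩).1 h.1
  rw [← h.2 _ Set.inter_subset_left hsat]
  exact Set.inter_subset_right

@[simp] theorem sat_top : sat I (top : IForm α) := fun e => e.elim

@[simp] theorem sat_or {F G : IForm α} : sat I (IForm.or F G) ↔ sat I F ∨ sat I G :=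
  ⟨fun ⟨b, hb⟩ => by cases b <;> simp_all,
    fun h => h.elim (fun hF => show ∃ b, _ from ⟨true, hF⟩) (fun hG => ⟨false, hG⟩)⟩

theorem sat_conjList {l : List (IForm α)} : sat I (conjList l) ↔ ∀ F ∈ l, sat I F :=
  ⟨fun h _ hF => by obtain ⟨i, rfl⟩ := List.get_of_mem hF; exact h i,
    fun h i => h _ (List.get_mem l i)⟩

theorem sat_reduct_conjList {l : List (IForm α)} :
    sat J (reduct I (conjList l)) ↔ ∀ F ∈ l, sat J (reduct I F) :=
  ⟨fun h _ hF => by obtain ⟨i, rfl⟩ := List.get_of_mem hF; exact h i,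
    fun h i => h _ (List.get_mem l i)⟩

theorem atoms_conjList {l : List (IForm α)} {a : α} :
    a ∈ atoms (conjList l) ↔ ∃ F ∈ l, a ∈ atoms F := by
  simp only [conjList, atoms, Set.mem_iUnion]
  exact ⟨fun ⟨i, hi⟩ => ⟨_, List.get_mem l i, hi⟩,
    fun ⟨F, hF, ha⟩ => by obtain ⟨i, rfl⟩ := List.get_of_mem hF; exact ⟨i, ha⟩⟩

theorem sat_reduct_or {F G : IForm α} :
    sat J (reduct I (or F G)) ↔ sat J (reduct I F) ∨ sat J (reduct I G) :=
  ⟨fun ⟨b, hb⟩ => by cases b <;> simp_all,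
    fun h => h.elim (fun hF => show ∃ b, _ from ⟨true, hF⟩) (fun hG => ⟨false, hG⟩)⟩

theorem reduct_conj (I : Set α) (ι : Type) (f : ι → IForm α) :
    reduct I (conj ι f) = conj ι fun i => reduct I (f i) :=
  rfl

end IForm

section Valuations
variable {C : Type}

theorem updList_of_not_mem (v : Val C) :
    ∀ {xs : List ℕ} (rs : List (Pre C)) {x : ℕ}, x ∉ xs → updList v xs rs x = v x
  | [], _, _, _ => rfl
  | _ :: _, [], _, _ => rfl
  | _ :: xs, _ :: rs, _, h => by
      rw [List.mem_cons, not_or] at h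
      rw [updList, Function.update_of_ne h.1, updList_of_not_mem v rs h.2]

theorem updList_congr_of_mem (v₁ v₂ : Val C) :
    ∀ {xs : List ℕ} {rs : List (Pre C)}, rs.length = xs.length →
      ∀ x ∈ xs, updList v₁ xs rs x = updList v₂ xs rs x
  | [], _, _, _, hx => absurd hx List.not_mem_nil
  | y :: ys, r :: rs, hlen, x, hx => by
      by_cases hxy : x = y
      · subst hxy
        simp [updList]
      · rw [updList, updList, Function.update_of_ne hxy, Function.update_of_ne hxy]
        exact updList_congr_of_mem v₁ v₂ (Nat.succ.inj hlen) x (List.mem_of_ne_of_mem hxy hx)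

theorem updList_update_comm (v : Val C) :
    ∀ {xs : List ℕ} (rs : List (Pre C)) {x : ℕ} (r : Pre C), x ∉ xs →
      updList (Function.update v x r) xs rs = Function.update (updList v xs rs) x r
  | [], _, _, _, _ => rfl
  | _ :: _, [], _, _, _ => rfl
  | _ :: _, _ :: rs, _, r, h => by
      rw [List.mem_cons, not_or] at h
      rw [updList, updList, updList_update_comm v rs r h.2]
      exact Function.update_comm h.1 _ _ _

theorem map_updList_self (v : Val C) :
    ∀ {xs : List ℕ} {rs : List (Pre C)}, xs.Nodup → rs.length = xs.length →
      xs.map (updList v xs rs) = rs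
  | [], [], _, _ => rfl
  | y :: ys, r :: rs, hnd, hlen => by
      rw [List.nodup_cons] at hnd
      rw [List.map_cons, updList, Function.update_self]
      congr 1
      refine (List.map_congr_left fun x hx => ?_).trans
        (map_updList_self v hnd.2 (Nat.succ.inj hlen))
      exact Function.update_of_ne (ne_of_mem_of_not_mem hx hnd.1) _ _

theorem updList_map (v : Val C) {xs : List ℕ} (hnd : xs.Nodup) (g : ℕ → Pre C) (x : ℕ) :
    updList v xs (xs.map g) x = if x ∈ xs then g x else v x := by
  split_ifs with hx
  · obtain ⟨i, hi, rfl⟩ := List.getElem_of_mem hx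
    have := congrArg (·[i]?) (map_updList_self v hnd (List.length_map g))
    simpa [List.getElem?_eq_getElem hi] using this
  · exact updList_of_not_mem v _ hx

theorem updList_congr {v₁ v₂ : Val C} {xs : List ℕ} {rs : List (Pre C)}
    (hlen : rs.length = xs.length) {x : ℕ} (h : x ∉ xs → v₁ x = v₂ x) :
    updList v₁ xs rs x = updList v₂ xs rs x := by
  by_cases hx : x ∈ xs
  · exact updList_congr_of_mem v₁ v₂ hlen x hx
  · rw [updList_of_not_mem _ _ hx, updList_of_not_mem _ _ hx, h hx]

theorem exists_updList_eq_on {v₁ v₂ : Val C} {S xs xs' : List ℕ} (hnd : xs'.Nodup)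
    (hsub : ∀ x ∈ S, x ∈ xs → x ∈ xs') (hv : ∀ x ∈ S, x ∉ xs → v₁ x = v₂ x)
    (ss : List (Pre C)) :
    ∃ rs : List (Pre C), rs.length = xs'.length ∧
      ∀ x ∈ S, updList v₂ xs' rs x = updList v₁ xs ss x := by
  refine ⟨xs'.map (updList v₁ xs ss), List.length_map _, fun x hx => ?_⟩
  rw [updList_map v₂ hnd]
  split_ifs with hx'
  · rfl
  · have hxs : x ∉ xs := fun h => hx' (hsub x hx h)
    rw [updList_of_not_mem _ _ hxs, hv x hx hxs]

theorem exists_updList_iff {P : Val C → Prop} {xs : List ℕ} (hnd : xs.Nodup)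
    (hP : ∀ w w', (∀ x ∈ xs, w x = w' x) → P w → P w') (u : Val C) :
    (∃ ss : List (Pre C), ss.length = xs.length ∧ P (updList u xs ss)) ↔ ∃ w, P w :=
  ⟨fun ⟨_, _, h⟩ => ⟨_, h⟩, fun ⟨w, h⟩ => ⟨xs.map w, List.length_map _,
    hP _ _ (fun x hx => by rw [updList_map u hnd, if_pos hx]) h⟩⟩

end Valuations

theorem lt_freshVar {x : ℕ} {l : List ℕ} (hx : x ∈ l) : x < freshVar l :=
  Nat.lt_succ_of_le (List.le_max_of_le' 0 hx le_rfl)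

theorem nodup_range_map_add (k n : ℕ) : ((List.range k).map (· + n)).Nodup :=
  List.nodup_range.map (add_left_injective n)

theorem le_of_mem_range_map_add {k n w : ℕ} (h : w ∈ (List.range k).map (· + n)) : n ≤ w := by
  obtain ⟨i, _, rfl⟩ := List.mem_map.1 h
  exact Nat.le_add_left n i

section Terms
variable {C O : Type} (opFun : O → List ℤ → Option ℤ)

mutual
theorem Term.val_congr {v₁ v₂ : Val C} :
    ∀ (t : Term C O), (∀ x ∈ t.varList, v₁ x = v₂ x) → Term.val opFun v₁ t = Term.val opFun v₂ t
  | .num _, _ | .sym _, _ | .inf, _ | .sup, _ => rfl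
  | .var x, h => by simp only [Term.val, h x (List.mem_singleton_self x)]
  | .app f ts, h => by
      ext r
      exact exists_congr fun rs => and_congr_left' (Term.vals_congr ts rs h)
  | .op o ts, h => by
      ext r
      exact exists_congr fun ks => and_congr_left' (Term.vals_congr ts _ h)
  | .interval t₁ t₂, h => by
      simp only [Term.val,
        Term.val_congr t₁ fun x hx => h x (List.mem_append_left _ hx),
        Term.val_congr t₂ fun x hx => h x (List.mem_append_right _ hx)]

theorem Term.vals_congr {v₁ v₂ : Val C} :
    ∀ (ts : List (Term C O)) (rs : List (Pre C)), (∀ x ∈ Term.varListL ts, v₁ x = v₂ x) →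
      (Term.vals opFun v₁ ts rs ↔ Term.vals opFun v₂ ts rs)
  | [], _, _ => Iff.rfl
  | t :: ts, _, h => by
      simp only [Term.vals,
        Term.val_congr t fun x hx => h x (List.mem_append_left _ hx),
        Term.vals_congr ts _ fun x hx => h x (List.mem_append_right _ hx)]
end

mutual
theorem Pre.val_toTerm (v : Val C) : ∀ r : Pre C, Term.val opFun v (Pre.toTerm (O := O) r) = {r}
  | .inf | .sup | .num _ | .sym _ => rfl
  | .app f rs => by
      ext q
      simp only [Pre.toTerm, Term.val, Set.mem_ofPred_eq, Set.mem_singleton_iff,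
        Pre.vals_toTermL v rs]
      exact ⟨fun ⟨_, h, hq⟩ => h ▸ hq, fun hq => ⟨rs, rfl, hq⟩⟩

theorem Pre.vals_toTermL (v : Val C) :
    ∀ (rs rs' : List (Pre C)), Term.vals opFun v (Pre.toTermL (O := O) rs) rs' ↔ rs' = rs
  | [], _ => Iff.rfl
  | r :: rs, rs' => by
      simp only [Pre.toTermL, Term.vals, Pre.val_toTerm v r, Set.mem_singleton_iff,
        Pre.vals_toTermL v rs]
      exact ⟨fun ⟨_, _, h, hr, hrs⟩ => by rw [h, hr, hrs], fun h => ⟨r, rs, h, rfl, rfl⟩⟩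
end

theorem Term.length_of_vals {v : Val C} :
    ∀ {ts : List (Term C O)} {rs : List (Pre C)}, Term.vals opFun v ts rs → rs.length = ts.length
  | [], _, h => by rw [h]; rfl
  | _ :: _, _, ⟨_, _, rfl, _, hrs⟩ => congrArg Nat.succ (Term.length_of_vals hrs)

end Terms

section Connectives
variable {C O A : Type} (opFun : O → List ℤ → Option ℤ)
  (aggFun : A → Set (List (Pre C)) → Pre C) (lt : Pre C → Pre C → Prop) (I : Interp C)

namespace AFml

@[simp] theorem sat_negF (v : Val C) (F : AFml C O A) :
    sat opFun aggFun lt I v (negF F) ↔ ¬ sat opFun aggFun lt I v F :=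
  Iff.rfl

@[simp] theorem sat_andF (v : Val C) (F G : AFml C O A) :
    sat opFun aggFun lt I v (andF F G) ↔ sat opFun aggFun lt I v F ∧ sat opFun aggFun lt I v G := by
  simp only [andF, sat]
  tauto

@[simp] theorem sat_orF (v : Val C) (F G : AFml C O A) :
    sat opFun aggFun lt I v (orF F G) ↔ sat opFun aggFun lt I v F ∨ sat opFun aggFun lt I v G := by
  simp only [orF, negF, sat]
  tauto

@[simp] theorem sat_iffF (v : Val C) (F G : AFml C O A) :
    sat opFun aggFun lt I v (iffF F G) ↔
      (sat opFun aggFun lt I v F ↔ sat opFun aggFun lt I v G) := by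
  simp only [iffF, sat_andF, sat]
  tauto

theorem sat_andList (v : Val C) (l : List (AFml C O A)) :
    sat opFun aggFun lt I v (andList l) ↔ ∀ F ∈ l, sat opFun aggFun lt I v F := by
  induction l with
  | nil => simp [andList, topF, sat]
  | cons F l ih => simp [andList, ← ih]

theorem sat_orList (v : Val C) (l : List (AFml C O A)) :
    sat opFun aggFun lt I v (orList l) ↔ ∃ F ∈ l, sat opFun aggFun lt I v F := by
  induction l with
  | nil => simp [orList, sat]
  | cons F l ih => simp [orList, ← ih]

theorem sat_exF (v : Val C) (x : ℕ) (F : AFml C O A) :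
    sat opFun aggFun lt I v (exF x F) ↔ ∃ r, sat opFun aggFun lt I (Function.update v x r) F := by
  simp only [exF, sat_negF, sat, not_forall, not_not]

theorem sat_exList {xs : List ℕ} (hnd : xs.Nodup) (v : Val C) (F : AFml C O A) :
    sat opFun aggFun lt I v (exList xs F) ↔
      ∃ rs : List (Pre C), rs.length = xs.length ∧ sat opFun aggFun lt I (updList v xs rs) F := by
  induction xs generalizing v with
  | nil => exact ⟨fun h => ⟨[], rfl, h⟩, fun ⟨rs, _, h⟩ => by cases rs <;> exact h⟩
  | cons x xs ih =>
      rw [List.nodup_cons] at hnd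
      simp only [exList, List.foldr_cons] at ih ⊢
      rw [sat_exF]
      constructor
      · rintro ⟨r, hr⟩
        obtain ⟨rs, hlen, hsat⟩ := (ih hnd.2 _).1 hr
        refine ⟨r :: rs, congrArg Nat.succ hlen, ?_⟩
        rwa [updList, ← updList_update_comm v rs r hnd.1]
      · rintro ⟨_ | ⟨r, rs⟩, hlen, hsat⟩
        · exact absurd hlen (Nat.succ_ne_zero _).symm
        refine ⟨r, (ih hnd.2 _).2 ⟨rs, Nat.succ.inj hlen, ?_⟩⟩
        rwa [updList_update_comm v rs r hnd.1]

theorem sat_allList {xs : List ℕ} (hnd : xs.Nodup) (v : Val C) (F : AFml C O A) :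
    sat opFun aggFun lt I v (allList xs F) ↔
      ∀ rs : List (Pre C), rs.length = xs.length → sat opFun aggFun lt I (updList v xs rs) F := by
  induction xs generalizing v with
  | nil =>
      refine ⟨fun h rs hrs => ?_, fun h => h [] rfl⟩
      rwa [List.eq_nil_of_length_eq_zero hrs]
  | cons x xs ih =>
      rw [List.nodup_cons] at hnd
      simp only [allList, List.foldr_cons] at ih ⊢
      change (∀ r, sat opFun aggFun lt I (Function.update v x r) _) ↔ _
      constructor
      · rintro h (_ | ⟨r, rs⟩) hlen
        · exact absurd hlen (Nat.succ_ne_zero _).symm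
        rw [updList, ← updList_update_comm v rs r hnd.1]
        exact (ih hnd.2 _).1 (h r) rs (Nat.succ.inj hlen)
      · refine fun h r => (ih hnd.2 _).2 fun rs hlen => ?_
        rw [updList_update_comm v rs r hnd.1]
        exact h (r :: rs) (congrArg Nat.succ hlen)

theorem sat_atom_map_var (v : Val C) (p : C) (ws : List ℕ) :
    sat opFun aggFun lt I v (atom p (ws.map AArg.var)) ↔ (p, ws.map v) ∈ I := by
  suffices AArg.evalL opFun aggFun lt I v (ws.map AArg.var) = ws.map v by
    rw [sat, this]
  induction ws with
  | nil => rfl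
  | cons w ws ih => exact congrArg (v w :: ·) ih

end AFml

theorem sat_memConj (v : Val C) :
    ∀ {ws : List ℕ} {ts : List (Term C O)}, ws.length = ts.length →
      (AFml.sat opFun aggFun lt I v (memConj (A := A) ws ts) ↔ Term.vals opFun v ts (ws.map v))
  | [], [], _ => by simp [memConj, AFml.sat_andList, Term.vals]
  | w :: ws, t :: ts, hlen => by
      have ih := sat_memConj v (ws := ws) (ts := ts) (Nat.succ.inj hlen)
      simp only [memConj, AFml.sat_andList] at ih
      simp only [memConj, AFml.sat_andList, List.zip_cons_cons, List.map_cons,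
        List.forall_mem_cons, ih, Term.vals]
      exact ⟨fun ⟨hw, hws⟩ => ⟨v w, _, rfl, hw, hws⟩,
        fun ⟨_, _, h, hr, hrs⟩ => by cases h; exact ⟨hr, hrs⟩⟩

end Connectives

section TauSemantics
variable {C O A : Type} (opFun : O → List ℤ → Option ℤ)
  (aggFun : A → Set (List (Pre C)) → Pre C) (lt : Pre C → Pre C → Prop) (I : Interp C)

theorem sat_tauLit (v : Val C) (l : Lit C O) :
    IForm.sat I (tauLit opFun v l) ↔ ∃ rs, Term.vals opFun v l.args rs ∧
      if l.pos then (l.pred, rs) ∈ I else (l.pred, rs) ∉ I := by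
  unfold tauLit
  cases l.pos
  · exact ⟨fun ⟨rs, h⟩ => ⟨rs.1, rs.2, h⟩, fun ⟨rs, hrs, h⟩ => ⟨⟨rs, hrs⟩, h⟩⟩
  · exact ⟨fun ⟨rs, h⟩ => ⟨rs.1, rs.2, h⟩, fun ⟨rs, hrs, h⟩ => ⟨⟨rs, hrs⟩, h⟩⟩

theorem sat_tauComp (v : Val C) (c : Comp C O) :
    IForm.sat I (tauComp opFun lt v c) ↔ ∃ r₁ ∈ Term.val opFun v c.lhs,
      ∃ r₂ ∈ Term.val opFun v c.rhs, Rel.eval lt c.rel r₁ r₂ := by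
  unfold tauComp
  split_ifs with h
  · exact iff_of_true IForm.sat_top h
  · exact iff_of_false id h

theorem sat_tauCond (v : Val C) (cond : List (CondElem C O)) :
    IForm.sat I (tauCond opFun lt v cond) ↔
      ∀ ce ∈ cond, IForm.sat I (tauCondElem opFun lt v ce) := by
  simp only [tauCond, IForm.sat_conjList, List.forall_mem_map]

theorem sat_tauBody (v : Val C) (loc : List ℕ) (b : List (BElem C O A)) :
    IForm.sat I (tauBody opFun aggFun lt v loc b) ↔
      ∀ e ∈ b, IForm.sat I (tauBElem opFun aggFun lt v loc e) := by
  simp only [tauBody, IForm.sat_conjList, List.forall_mem_map]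

def condTuples (v : Val C) (xs : List ℕ) (E : AggExpr C O A) : Set (AggTuple C xs) :=
  {rs | IForm.sat I (tauCond opFun lt (updList v xs rs.val) E.cond)}

/-- A non-justifying `Δ` differs from the set of tuples satisfying the condition, so some tuple
outside `Δ` satisfies it. -/
theorem sat_tauAgg (v : Val C) (xs : List ℕ) (E : AggExpr C O A) :
    IForm.sat I (tauAgg opFun aggFun lt v xs E) ↔
      Justifies opFun aggFun lt v xs E (condTuples opFun lt I v xs E) := by
  constructor
  · intro h
    by_contra hnj
    obtain ⟨⟨rs, hrs⟩, hsat⟩ := h ⟨_, hnj⟩ fun rs => rs.2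
    exact hrs hsat
  · intro hj Δ hΔ
    have hsub : Δ.val ⊆ condTuples opFun lt I v xs E := fun rs hrs => hΔ ⟨rs, hrs⟩
    have hne : Δ.val ≠ condTuples opFun lt I v xs E := fun he => Δ.2 (he ▸ hj)
    obtain ⟨rs, hrs, hnrs⟩ := Set.exists_of_ssubset (hsub.ssubset_of_ne hne)
    exact ⟨⟨rs, hnrs⟩, hrs⟩

theorem tauCondElem_congr {v₁ v₂ : Val C} (ce : CondElem C O)
    (h : ∀ x ∈ ce.varList, v₁ x = v₂ x) :
    IForm.sat I (tauCondElem opFun lt v₁ ce) ↔ IForm.sat I (tauCondElem opFun lt v₂ ce) := by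
  cases ce with
  | inl l =>
      simp only [tauCondElem, sat_tauLit, Term.vals_congr opFun l.args _ h]
  | inr c =>
      simp only [tauCondElem, sat_tauComp,
        Term.val_congr opFun c.lhs fun x hx => h x (List.mem_append_left _ hx),
        Term.val_congr opFun c.rhs fun x hx => h x (List.mem_append_right _ hx)]

theorem tauCond_congr {v₁ v₂ : Val C} (cond : List (CondElem C O))
    (h : ∀ x ∈ cond.flatMap CondElem.varList, v₁ x = v₂ x) :
    IForm.sat I (tauCond opFun lt v₁ cond) ↔ IForm.sat I (tauCond opFun lt v₂ cond) := by
  simp only [sat_tauCond]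
  exact forall₂_congr fun ce hce =>
    tauCondElem_congr opFun lt I ce fun x hx => h x (List.mem_flatMap.2 ⟨ce, hce, hx⟩)

theorem tauAgg_congr {v₁ v₂ : Val C} (xs : List ℕ) (E : AggExpr C O A)
    (hlhs : ∀ x ∈ E.lhsVarList, x ∉ xs → v₁ x = v₂ x)
    (hbound : ∀ x ∈ boundVarList E.bound, v₁ x = v₂ x) :
    IForm.sat I (tauAgg opFun aggFun lt v₁ xs E) ↔
      IForm.sat I (tauAgg opFun aggFun lt v₂ xs E) := by
  have hupd (rs : AggTuple C xs) (x) (hx : x ∈ E.lhsVarList) :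
      updList v₁ xs rs.1 x = updList v₂ xs rs.1 x :=
    updList_congr rs.2 (hlhs x hx)
  have htuples : condTuples opFun lt I v₁ xs E = condTuples opFun lt I v₂ xs E := by
    ext rs
    exact tauCond_congr opFun lt I E.cond fun x hx => hupd rs x (List.mem_append_right _ hx)
  have hbv : boundVal v₁ E.bound = boundVal v₂ E.bound := by
    cases hb : E.bound with
    | inl x => exact hbound x (by rw [hb]; exact List.mem_singleton_self x)
    | inr r => rfl
  simp only [sat_tauAgg, htuples, Justifies, hbv]
  refine Iff.of_eq (congrArg (fun S => Rel.eval lt E.rel (aggFun E.name S) _) ?_)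
  ext q
  exact exists_congr fun rs => and_congr_right fun _ =>
    Term.vals_congr opFun E.ts q fun x hx => hupd rs x (List.mem_append_left _ hx)

end TauSemantics

namespace Rule
variable {C O A : Type} {R : Rule C O A} {x : ℕ}

theorem nodup_globalList (R : Rule C O A) : R.globalList.Nodup := List.nodup_dedup _

theorem nodup_localList (R : Rule C O A) : R.localList.Nodup := (List.nodup_dedup _).filter _

theorem mem_globalList_of_mem_head (h : x ∈ R.head.varList) : x ∈ R.globalList :=
  List.mem_dedup.2 (List.mem_append_left _ h)

theorem mem_globalList_of_bound {E : AggExpr C O A} (hE : .agg E ∈ R.body)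
    (h : x ∈ boundVarList E.bound) : x ∈ R.globalList :=
  List.mem_dedup.2 (List.mem_append_right _ (List.mem_flatMap.2 ⟨_, hE, h⟩))

theorem mem_globalList_of_lit {l : Lit C O} (hl : .lit l ∈ R.body) (h : x ∈ l.varList) :
    x ∈ R.globalList :=
  List.mem_dedup.2 (List.mem_append_right _ (List.mem_flatMap.2 ⟨_, hl, h⟩))

theorem mem_globalList_of_comp {c : Comp C O} (hc : .comp c ∈ R.body) (h : x ∈ c.varList) :
    x ∈ R.globalList :=
  List.mem_dedup.2 (List.mem_append_right _ (List.mem_flatMap.2 ⟨_, hc, h⟩))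

theorem mem_globalList_of_mem_body {e : BElem C O A} (he : e ∈ R.body) (hx : x ∈ e.varList)
    (hloc : x ∉ R.localList) : x ∈ R.globalList := by
  cases e with
  | lit l => exact mem_globalList_of_lit he hx
  | comp c => exact mem_globalList_of_comp he hx
  | agg E =>
      rcases List.mem_append.1 hx with hx | hx
      · by_contra hng
        exact hloc (List.mem_filter.2
          ⟨List.mem_dedup.2 (List.mem_flatMap.2 ⟨_, he, hx⟩), by simpa using hng⟩)
      · exact mem_globalList_of_bound he hx

theorem mem_varList_of_mem_globalList (h : x ∈ R.globalList) : x ∈ R.varList := by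
  rcases List.mem_append.1 (List.mem_dedup.1 h) with h | h
  · exact List.mem_append_left _ h
  · obtain ⟨e, he, hx⟩ := List.mem_flatMap.1 h
    refine List.mem_append_right _ (List.mem_flatMap.2 ⟨e, he, ?_⟩)
    cases e with
    | lit l | comp c => exact hx
    | agg E => exact List.mem_append_right _ hx

end Rule

theorem tauBody_congr {C O A : Type} (opFun : O → List ℤ → Option ℤ)
    (aggFun : A → Set (List (Pre C)) → Pre C) (lt : Pre C → Pre C → Prop) (I : Interp C)
    {R : Rule C O A} {v₁ v₂ : Val C} (h : ∀ x ∈ R.globalList, v₁ x = v₂ x) :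
    IForm.sat I (tauBody opFun aggFun lt v₁ R.localList R.body) ↔
      IForm.sat I (tauBody opFun aggFun lt v₂ R.localList R.body) := by
  simp only [sat_tauBody]
  refine forall₂_congr fun e he => ?_
  cases e with
  | lit l =>
      exact tauCondElem_congr opFun lt I (.inl l) fun x hx =>
        h x (Rule.mem_globalList_of_lit he hx)
  | comp c =>
      exact tauCondElem_congr opFun lt I (.inr c) fun x hx =>
        h x (Rule.mem_globalList_of_comp he hx)
  | agg E =>
      refine tauAgg_congr opFun aggFun lt I _ E (fun x hx hxs => h x ?_)
        fun x hx => h x (Rule.mem_globalList_of_bound he hx)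
      refine Rule.mem_globalList_of_mem_body he (List.mem_append_left _ hx) fun hloc => hxs ?_
      exact List.mem_filter.2 ⟨List.mem_dedup.2 (List.mem_append_left _ hx), by simpa using hloc⟩

section PhiTau
variable {C O A : Type} (opFun : O → List ℤ → Option ℤ)
  (aggFun : A → Set (List (Pre C)) → Pre C) (lt : Pre C → Pre C → Prop) (I : Interp C)

theorem sat_memConj_updList {v : Val C} {ws : List ℕ} {ts : List (Term C O)} {rs : List (Pre C)}
    (hnd : ws.Nodup) (hlen : ws.length = ts.length) (hrs : rs.length = ws.length)
    (hfresh : ∀ w ∈ ws, w ∉ Term.varListL ts) :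
    AFml.sat opFun aggFun lt I (updList v ws rs) (memConj (A := A) ws ts) ↔
      Term.vals opFun v ts rs := by
  rw [sat_memConj opFun aggFun lt I _ hlen, map_updList_self v hnd hrs]
  exact Term.vals_congr opFun ts rs fun x hx =>
    updList_of_not_mem v rs fun hxw => hfresh x hxw hx

theorem sat_phiLit (v : Val C) (l : Lit C O) :
    AFml.sat opFun aggFun lt I v (phiLit l) ↔ IForm.sat I (tauLit opFun v l) := by
  set ws := (List.range l.args.length).map (· + freshVar l.varList)
  have hnd : ws.Nodup := nodup_range_map_add _ _
  have hlen : ws.length = l.args.length := by simp [ws]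
  have hfresh : ∀ w ∈ ws, w ∉ l.varList := fun w hw hmem =>
    (le_of_mem_range_map_add hw).not_gt (lt_freshVar hmem)
  change AFml.sat opFun aggFun lt I v (AFml.exList ws (AFml.andF (memConj ws l.args)
    (if l.pos then .atom l.pred (ws.map AArg.var) else .negF (.atom l.pred (ws.map AArg.var))))) ↔ _
  rw [sat_tauLit, AFml.sat_exList opFun aggFun lt I hnd]
  refine exists_congr fun rs => ⟨fun ⟨hrs, hsat⟩ => ?_, fun ⟨hvals, hsat⟩ => ?_⟩
  · rw [AFml.sat_andF] at hsat
    refine ⟨(sat_memConj_updList opFun aggFun lt I hnd hlen hrs hfresh).1 hsat.1, ?_⟩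
    have hatom := hsat.2
    split_ifs at hatom ⊢ <;>
      simpa only [AFml.sat_negF, AFml.sat_atom_map_var, map_updList_self v hnd hrs] using hatom
  · have hrs : rs.length = ws.length := (Term.length_of_vals opFun hvals).trans hlen.symm
    refine ⟨hrs, (AFml.sat_andF ..).2
      ⟨(sat_memConj_updList opFun aggFun lt I hnd hlen hrs hfresh).2 hvals, ?_⟩⟩
    split_ifs at hsat ⊢ <;>
      simpa only [AFml.sat_negF, AFml.sat_atom_map_var, map_updList_self v hnd hrs] using hsat

theorem sat_phiComp (v : Val C) (c : Comp C O) :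
    AFml.sat opFun aggFun lt I v (phiComp c) ↔ IForm.sat I (tauComp opFun lt v c) := by
  set n := freshVar c.varList
  change AFml.sat opFun aggFun lt I v (AFml.exF n (AFml.exF (n + 1) (AFml.andF
    (AFml.mem (AArg.var n) c.lhs) (AFml.andF (AFml.mem (AArg.var (n + 1)) c.rhs)
      (AFml.cmp c.rel (AArg.var n) (AArg.var (n + 1))))))) ↔ _
  have hval (t : Term C O) (ht : ∀ x ∈ t.varList, x ∈ c.varList) (r₁ r₂ : Pre C) :
      Term.val opFun (Function.update (Function.update v n r₁) (n + 1) r₂) t =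
        Term.val opFun v t :=
    Term.val_congr opFun t fun x hx => by
      have := lt_freshVar (ht x hx)
      rw [Function.update_of_ne (by omega), Function.update_of_ne (by omega)]
  rw [sat_tauComp, AFml.sat_exF]
  simp only [AFml.sat_exF, AFml.sat_andF, AFml.sat, AArg.eval, Function.update_self,
    Function.update_of_ne (Nat.ne_add_one n),
    hval c.lhs (fun _ => List.mem_append_left _), hval c.rhs (fun _ => List.mem_append_right _)]
  exact ⟨fun ⟨r₁, r₂, h₁, h₂, h⟩ => ⟨r₁, h₁, r₂, h₂, h⟩,
    fun ⟨r₁, h₁, r₂, h₂, h⟩ => ⟨r₁, r₂, h₁, h₂, h⟩⟩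

theorem sat_phiCond (v : Val C) (cond : List (CondElem C O)) :
    AFml.sat opFun aggFun lt I v (phiCond cond) ↔ IForm.sat I (tauCond opFun lt v cond) := by
  rw [sat_tauCond, phiCond, AFml.sat_andList, List.forall_mem_map]
  refine forall₂_congr fun ce _ => ?_
  cases ce with
  | inl l => exact sat_phiLit opFun aggFun lt I v l
  | inr c => exact sat_phiComp opFun aggFun lt I v c

theorem val_boundTerm (u : Val C) (b : ℕ ⊕ Pre C) :
    Term.val opFun u (boundTerm (O := O) b) = {boundVal u b} := by
  cases b with
  | inl x => rfl
  | inr r => exact Pre.val_toTerm opFun u r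

/-- The left side is the set aggregated by `α` in `φ(E)`, the right side the set `[Δ]` of `τ(E)`
for the tuples `Δ` satisfying the condition. -/
theorem setOf_sat_aggBody {u v : Val C} {xs zs : List ℕ} (E : AggExpr C O A) (hxs : xs.Nodup)
    (hzs : zs.Nodup) (hlen : zs.length = E.ts.length) (hzxs : ∀ z ∈ zs, z ∉ xs)
    (hzE : ∀ z ∈ zs, z ∉ E.lhsVarList) (huv : ∀ x ∈ E.lhsVarList, x ∉ xs → u x = v x) :
    {q | q.length = zs.length ∧ AFml.sat opFun aggFun lt I (updList u zs q)
        (AFml.exList xs (AFml.andF (memConj zs E.ts) (phiCond E.cond)))} =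
      {q | ∃ rs ∈ condTuples opFun lt I v (E.varList.dedup.filter (· ∈ xs)) E,
        Term.vals opFun (updList v (E.varList.dedup.filter (· ∈ xs)) rs.1) E.ts q} := by
  set xs' := E.varList.dedup.filter (· ∈ xs)
  have hxs' : xs'.Nodup := E.varList.nodup_dedup.filter _
  have hmem : ∀ x ∈ E.lhsVarList, x ∈ xs' ↔ x ∈ xs := fun x hx => by
    simp [xs', List.mem_filter, List.mem_dedup, AggExpr.varList, hx]
  have hagree (q : List (Pre C)) (w w' : Val C) (h : ∀ x ∈ E.lhsVarList, w x = w' x) :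
      IForm.sat I (tauCond opFun lt w E.cond) ∧ Term.vals opFun w E.ts q ↔
        IForm.sat I (tauCond opFun lt w' E.cond) ∧ Term.vals opFun w' E.ts q :=
    and_congr (tauCond_congr opFun lt I E.cond fun x hx => h x (List.mem_append_right _ hx))
      (Term.vals_congr opFun E.ts q fun x hx => h x (List.mem_append_left _ hx))
  have hzq {q : List (Pre C)} (hq : q.length = zs.length) (ss : List (Pre C)) :
      zs.map (updList (updList u zs q) xs ss) = q :=
    (List.map_congr_left fun z hz => updList_of_not_mem _ _ (hzxs z hz)).trans
      (map_updList_self u hzs hq)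
  have hu (q : List (Pre C)) (x) (hx : x ∈ E.lhsVarList) (hxs : x ∉ xs) :
      updList u zs q x = v x := by
    rw [updList_of_not_mem _ _ fun hz => hzE x hz hx, huv x hx hxs]
  ext q
  simp only [Set.mem_ofPred_eq, AFml.sat_exList opFun aggFun lt I hxs, AFml.sat_andF, condTuples]
  constructor
  · rintro ⟨hq, ss, -, hts, hcond⟩
    rw [sat_memConj opFun aggFun lt I _ hlen, hzq hq] at hts
    rw [sat_phiCond] at hcond
    obtain ⟨rs, hrs, heq⟩ := exists_updList_eq_on hxs' (fun x hx => (hmem x hx).2)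
      (fun x hx => hu q x hx) ss
    exact ⟨⟨rs, hrs⟩, (hagree q _ _ fun x hx => (heq x hx).symm).1 ⟨hcond, hts⟩⟩
  · rintro ⟨⟨rs, hrs⟩, hsat⟩
    have hq : q.length = zs.length := (Term.length_of_vals opFun hsat.2).trans hlen.symm
    obtain ⟨ss, hss, heq⟩ := exists_updList_eq_on hxs (fun x hx => (hmem x hx).1)
      (fun x hx hx' => (hu q x hx fun h => hx' ((hmem x hx).2 h)).symm) rs
    have ⟨hcond, hts⟩ := (hagree q _ _ heq).2 hsat
    refine ⟨hq, ss, hss, ?_, (sat_phiCond opFun aggFun lt I _ _).2 hcond⟩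
    rwa [sat_memConj opFun aggFun lt I _ hlen, hzq hq]

theorem sat_phiAgg {xs : List ℕ} (hxs : xs.Nodup) (v : Val C) (E : AggExpr C O A) :
    AFml.sat opFun aggFun lt I v (phiAgg xs E) ↔
      IForm.sat I (tauAgg opFun aggFun lt v (E.varList.dedup.filter (· ∈ xs)) E) := by
  set n := freshVar (xs ++ E.varList)
  set zs := (List.range E.ts.length).map (· + (n + 1))
  have hxn : ∀ x ∈ xs, x < n := fun x hx => lt_freshVar (List.mem_append_left _ hx)
  have hEn : ∀ x ∈ E.varList, x < n := fun x hx => lt_freshVar (List.mem_append_right _ hx)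
  have hzn : ∀ z ∈ zs, n + 1 ≤ z := fun z hz => le_of_mem_range_map_add hz
  have hset (r : Pre C) := setOf_sat_aggBody opFun aggFun lt I (u := Function.update v n r)
    (zs := zs) E hxs (nodup_range_map_add _ _) (by simp [zs])
    (fun z hz hzx => by have := hxn z hzx; have := hzn z hz; omega)
    (fun z hz hzE => by have := hEn z (List.mem_append_left _ hzE); have := hzn z hz; omega)
    (fun x hx _ => Function.update_of_ne (hEn x (List.mem_append_left _ hx)).ne _ _)
  have hbound (r : Pre C) : boundVal (Function.update v n r) E.bound = boundVal v E.bound := by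
    cases hb : E.bound with
    | inl x =>
        have hx : x ∈ E.varList :=
          List.mem_append_right _ (by rw [hb]; exact List.mem_singleton_self x)
        exact Function.update_of_ne (hEn x hx).ne _ _
    | inr r => rfl
  change AFml.sat opFun aggFun lt I v (AFml.exF n (AFml.andF (AFml.cmp E.rel
    (AArg.agg E.name zs (AFml.exList xs (AFml.andF (memConj zs E.ts) (phiCond E.cond))))
    (AArg.var n)) (AFml.mem (AArg.var n) (boundTerm E.bound)))) ↔ _
  rw [AFml.sat_exF, sat_tauAgg, Justifies]
  simp only [AFml.sat_andF, AFml.sat, AArg.eval, Function.update_self, val_boundTerm, hbound,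
    Set.mem_singleton_iff, hset]
  exact ⟨fun ⟨_, h, hr⟩ => hr ▸ h, fun h => ⟨_, h, rfl⟩⟩

theorem sat_phiBody {xs : List ℕ} (hxs : xs.Nodup) (v : Val C) (b : List (BElem C O A)) :
    AFml.sat opFun aggFun lt I v (phiBody xs b) ↔ IForm.sat I (tauBody opFun aggFun lt v xs b) := by
  rw [sat_tauBody, phiBody, AFml.sat_andList, List.forall_mem_map]
  refine forall₂_congr fun e _ => ?_
  cases e with
  | lit l => exact sat_phiLit opFun aggFun lt I v l
  | comp c => exact sat_phiComp opFun aggFun lt I v c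
  | agg E => exact sat_phiAgg opFun aggFun lt I hxs v E

end PhiTau

section TauAtoms
variable {C O A : Type} (opFun : O → List ℤ → Option ℤ)
  (aggFun : A → Set (List (Pre C)) → Pre C) (lt : Pre C → Pre C → Prop) {v : Val C} {b : EGAtom C}

theorem Lit.hasPred_of_mem_atoms_tauLit {l : Lit C O} (hb : b ∈ (tauLit opFun v l).atoms) :
    l.hasPred b.1 b.2.length := by
  unfold tauLit at hb
  split_ifs at hb <;>
  · simp only [IForm.atoms, IForm.neg, Set.mem_iUnion, Set.union_empty,
      Set.mem_singleton_iff] at hb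
    obtain ⟨⟨rs, hrs⟩, rfl⟩ := hb
    exact ⟨rfl, (Term.length_of_vals opFun hrs).symm⟩

theorem atoms_tauComp (c : Comp C O) : (tauComp opFun lt v c).atoms = ∅ := by
  unfold tauComp
  split_ifs
  · exact Set.iUnion_of_empty _
  · rfl

theorem CondElem.hasPred_of_mem_atoms {ce : CondElem C O}
    (hb : b ∈ (tauCondElem opFun lt v ce).atoms) : ce.hasPred b.1 b.2.length := by
  cases ce with
  | inl l => exact Lit.hasPred_of_mem_atoms_tauLit opFun hb
  | inr c => exact (atoms_tauComp opFun lt c).subset hb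

theorem AggExpr.hasPred_of_mem_atoms {xs : List ℕ} {E : AggExpr C O A}
    (hb : b ∈ (tauAgg opFun aggFun lt v xs E).atoms) : E.hasPred b.1 b.2.length := by
  have hcond {w : Val C} (hb : b ∈ (tauCond opFun lt w E.cond).atoms) :
      E.hasPred b.1 b.2.length := by
    obtain ⟨_, hF, hbF⟩ := IForm.atoms_conjList.1 hb
    obtain ⟨ce, hce, rfl⟩ := List.mem_map.1 hF
    exact ⟨ce, hce, CondElem.hasPred_of_mem_atoms opFun lt hbF⟩
  simp only [tauAgg, IForm.atoms, Set.mem_iUnion, Set.mem_union] at hb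
  obtain ⟨_, ⟨_, hb⟩ | ⟨_, hb⟩⟩ := hb <;> exact hcond hb

theorem BElem.hasPred_of_mem_atoms {loc : List ℕ} {e : BElem C O A}
    (hb : b ∈ (tauBElem opFun aggFun lt v loc e).atoms) : e.hasPred b.1 b.2.length := by
  cases e with
  | lit l => exact Lit.hasPred_of_mem_atoms_tauLit opFun hb
  | comp c => exact (atoms_tauComp opFun lt c).subset hb
  | agg E => exact AggExpr.hasPred_of_mem_atoms opFun aggFun lt hb

theorem Rule.hasPredSym_of_mem_atoms {R : Rule C O A}
    (hb : b ∈ (tauRule opFun aggFun lt v R).atoms) : R.hasPredSym b.1 b.2.length := by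
  have hbody (hb : b ∈ (tauBody opFun aggFun lt v R.localList R.body).atoms) :
      R.hasPredSym b.1 b.2.length := by
    obtain ⟨_, hF, hbF⟩ := IForm.atoms_conjList.1 hb
    obtain ⟨e, he, rfl⟩ := List.mem_map.1 hF
    exact Or.inr ⟨e, he, BElem.hasPred_of_mem_atoms opFun aggFun lt hbF⟩
  have hhead {p : C} {ts : List (Term C O)} {rs : List (Pre C)} (h : R.head.hasPred p ts.length)
      (hrs : Term.vals opFun v ts rs) : R.hasPredSym p rs.length :=
    Or.inl (Term.length_of_vals opFun hrs ▸ h)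
  unfold tauRule at hb
  split at hb
  next p ts h =>
    simp only [IForm.atoms, Set.mem_union, Set.mem_iUnion, Set.mem_singleton_iff] at hb
    rcases hb with hb | ⟨⟨rs, hrs⟩, rfl⟩
    · exact hbody hb
    · exact hhead (by rw [h]; exact ⟨rfl, rfl⟩) hrs
  next p ts h =>
    simp only [IForm.atoms, IForm.or, Set.mem_union, Set.mem_iUnion] at hb
    rcases hb with hb | ⟨⟨rs, hrs⟩, bb, hb⟩
    · exact hbody hb
    · obtain rfl : b = (p, rs) := by cases bb <;> simpa [IForm.atoms, IForm.neg] using hb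
      exact hhead (by rw [h]; exact ⟨rfl, rfl⟩) hrs
  next =>
    simp only [IForm.atoms, IForm.neg, Set.union_empty] at hb
    exact hbody hb

end TauAtoms

section Reduct
variable {C O A : Type} (opFun : O → List ℤ → Option ℤ)
  (aggFun : A → Set (List (Pre C)) → Pre C) (lt : Pre C → Pre C → Prop) {I J : Interp C}

/-- Negative literals need no hypothesis: the reduct of `¬p(r)` depends only on `I`. -/
theorem sat_reduct_tauBElem (hJI : J ⊆ I) {v : Val C} {loc : List ℕ} {e : BElem C O A}
    (hI : IForm.sat I (tauBElem opFun aggFun lt v loc e))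
    (hJ : ∀ b : EGAtom C, e.hasPosOrAggPred b.1 b.2.length → b ∈ I → b ∈ J) :
    IForm.sat J (IForm.reduct I (tauBElem opFun aggFun lt v loc e)) := by
  cases e with
  | lit l =>
      cases hpos : l.pos
      · obtain ⟨rs, hrs, hnot⟩ := (sat_tauLit opFun I v l).1 hI
        simp only [hpos, Bool.false_eq_true, if_false] at hnot
        simp only [tauBElem, tauLit, hpos, Bool.false_eq_true, if_false]
        exact ⟨⟨rs, hrs⟩, (IForm.sat_reduct_neg _).2 hnot⟩
      · exact (IForm.sat_reduct_iff_of_atoms hJI fun b hb => hJ b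
          ⟨hpos, Lit.hasPred_of_mem_atoms_tauLit opFun hb⟩).2 hI
  | comp c =>
      refine (IForm.sat_reduct_iff_of_atoms hJI fun b hb => ?_).2 hI
      exact absurd hb ((atoms_tauComp opFun lt c).symm ▸ Set.notMem_empty b)
  | agg E =>
      exact (IForm.sat_reduct_iff_of_atoms hJI fun b hb =>
        hJ b (AggExpr.hasPred_of_mem_atoms opFun aggFun lt hb)).2 hI

theorem sat_reduct_tauBody (hJI : J ⊆ I) {v : Val C} {loc : List ℕ} {body : List (BElem C O A)}
    (hI : IForm.sat I (tauBody opFun aggFun lt v loc body))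
    (hJ : ∀ e ∈ body, ∀ b : EGAtom C, e.hasPosOrAggPred b.1 b.2.length → b ∈ I → b ∈ J) :
    IForm.sat J (IForm.reduct I (tauBody opFun aggFun lt v loc body)) := by
  rw [tauBody, IForm.sat_reduct_conjList, List.forall_mem_map]
  exact fun e he => sat_reduct_tauBElem opFun aggFun lt hJI
    ((sat_tauBody opFun aggFun lt I v loc body).1 hI e he) (hJ e he)

theorem sat_reduct_tauRule_iff (hJI : J ⊆ I) {v : Val C} {R : Rule C O A} {p : C}
    {ts : List (Term C O)} (hhead : R.head = .basic p ts ∨ R.head = .choice p ts)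
    (hI : IForm.sat I (tauRule opFun aggFun lt v R)) :
    IForm.sat J (IForm.reduct I (tauRule opFun aggFun lt v R)) ↔
      (IForm.sat J (IForm.reduct I (tauBody opFun aggFun lt v R.localList R.body)) →
        ∀ rs, Term.vals opFun v ts rs → (p, rs) ∈ I → (p, rs) ∈ J) := by
  rcases hhead with h | h <;> simp only [tauRule, h] at hI ⊢ <;>
    rw [IForm.sat_reduct_impl hI] <;> refine imp_congr_right fun hbody => ?_
  · have hheadI := hI (IForm.sat_of_sat_reduct hbody)
    exact ⟨fun hJ rs hrs _ => (IForm.sat_reduct_atom hJI _).1 (hJ ⟨rs, hrs⟩),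
      fun hJ ⟨rs, hrs⟩ => (IForm.sat_reduct_atom hJI _).2 (hJ rs hrs (hheadI ⟨rs, hrs⟩))⟩
  · simp only [IForm.reduct_conj, IForm.sat, IForm.sat_reduct_or, IForm.sat_reduct_atom hJI,
      IForm.sat_reduct_neg, Subtype.forall]
    exact forall₂_congr fun rs _ => ⟨fun h hI => h.resolve_right (not_not_intro hI),
      fun h => (em _).imp_left h⟩

theorem sat_reduct_tauRule_of_empty {v : Val C} {R : Rule C O A}
    (hhead : R.head = .empty) (hI : IForm.sat I (tauRule opFun aggFun lt v R)) :
    IForm.sat J (IForm.reduct I (tauRule opFun aggFun lt v R)) := by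
  simp only [tauRule, hhead] at hI ⊢
  exact (IForm.sat_reduct_neg _).2 hI

end Reduct

theorem wellFounded_of_finite_of_acyclic {α : Type} {r : α → α → Prop} {s : Set α}
    (hs : s.Finite) (hr : ∀ a b, r a b → a ∈ s) (hacyc : ∀ a, ¬ Relation.TransGen r a a) :
    WellFounded r := by
  have : IsStrictOrder α (Relation.TransGen r) :=
    { irrefl := hacyc, trans := fun _ _ _ => Relation.TransGen.trans }
  have hwf := Set.wellFoundedOn_iff.1 (hs.wellFoundedOn (r := Relation.TransGen r))
  have hmem {a b : α} (h : Relation.TransGen r a b) : a ∈ s := by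
    obtain ⟨c, hac, -⟩ := Relation.TransGen.head'_iff.1 h
    exact hr a c hac
  have hacc (a : α) (ha : a ∈ s) : Acc (Relation.TransGen r) a := by
    induction hwf.apply a with
    | intro a _ ih => exact ⟨_, fun c hca => ih c ⟨hca, hmem hca, ha⟩ (hmem hca)⟩
  exact Subrelation.wf Relation.TransGen.single ⟨fun b => ⟨_, fun a hab => hacc a (hmem hab)⟩⟩

namespace Head
variable {C O : Type}

theorem eq_empty_or (h : Head C O) :
    h = .empty ∨ ∃ p ts, h = .basic p ts ∨ h = .choice p ts := by
  cases h <;> simp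

end Head

theorem CondElem.finite_setOf_hasPred {C O : Type} (ce : CondElem C O) :
    {q : C × ℕ | ce.hasPred q.1 q.2}.Finite := by
  cases ce with
  | inl l =>
      exact (Set.finite_singleton (l.pred, l.args.length)).subset fun q h =>
        Prod.ext h.1.symm h.2.symm
  | inr c => exact Set.finite_empty.subset fun _ h => h.elim

theorem BElem.finite_setOf_hasPred {C O A : Type} (e : BElem C O A) :
    {q : C × ℕ | e.hasPred q.1 q.2}.Finite := by
  cases e with
  | lit l => exact CondElem.finite_setOf_hasPred (.inl l)
  | comp c => exact Set.finite_empty.subset fun _ h => h.elim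
  | agg E =>
      exact (E.cond.finite_toSet.biUnion fun ce _ => ce.finite_setOf_hasPred).subset
        fun q ⟨ce, hce, h⟩ => Set.mem_biUnion hce h

theorem wellFounded_depEdge {C O A : Type} {Γ : Set (Rule C O A)} (hfin : Γ.Finite)
    (htight : EGTight Γ) : WellFounded (flip (DepEdge Γ)) := by
  refine wellFounded_of_finite_of_acyclic (s := {q | ∃ R ∈ Γ, ∃ e ∈ R.body, e.hasPred q.1 q.2})
    ?_ ?_ fun q h => htight q (Relation.transGen_swap.1 h)
  · refine (hfin.biUnion fun R _ =>
      R.body.finite_toSet.biUnion fun e _ => e.finite_setOf_hasPred).subset ?_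
    exact fun q ⟨R, hR, e, he, h⟩ => Set.mem_biUnion hR (Set.mem_biUnion he h)
  · rintro p q ⟨R, hR, -, e, he, h⟩
    refine ⟨R, hR, e, he, ?_⟩
    cases e with
    | lit l => exact h.2
    | comp c | agg E => exact h

section Stable
variable {C O A : Type} (opFun : O → List ℤ → Option ℤ)
  (aggFun : A → Set (List (Pre C)) → Pre C) (lt : Pre C → Pre C → Prop)
  {I : Interp C} {Γ : Set (Rule C O A)}

def Supports (I : Interp C) (R : Rule C O A) (a : EGAtom C) : Prop :=
  ∃ ts, (R.head = .basic a.1 ts ∨ R.head = .choice a.1 ts) ∧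
    ∃ v, Term.vals opFun v ts a.2 ∧ IForm.sat I (tauBody opFun aggFun lt v R.localList R.body)

def TauSupported (I : Interp C) (Γ : Set (Rule C O A)) : Prop :=
  ∀ a ∈ I, ∃ R ∈ Γ, Supports opFun aggFun lt I R a

theorem sat_tauProg : IForm.sat I (tauProg opFun aggFun lt Γ) ↔
      ∀ R ∈ Γ, ∀ v, IForm.sat I (tauRule opFun aggFun lt v R) :=
  ⟨fun h R hR v => h (⟨R, hR⟩, v), fun h z => h z.1 z.1.2 z.2⟩

theorem sat_reduct_tauProg {J : Interp C} :
    IForm.sat J (IForm.reduct I (tauProg opFun aggFun lt Γ)) ↔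
      ∀ R ∈ Γ, ∀ v, IForm.sat J (IForm.reduct I (tauRule opFun aggFun lt v R)) :=
  ⟨fun h R hR v => h (⟨R, hR⟩, v), fun h z => h z.1 z.1.2 z.2⟩

theorem EGStable.subset_vocab (h : EGStable opFun aggFun lt I Γ) : I ⊆ vocab Γ := fun a ha => by
  obtain ⟨z, hz⟩ := Set.mem_iUnion.1 (IForm.stable.subset_atoms h ha)
  exact ⟨z.1, z.1.2, Rule.hasPredSym_of_mem_atoms opFun aggFun lt hz⟩

theorem EGStable.sat_tauRule (h : EGStable opFun aggFun lt I Γ) :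
    ∀ R ∈ Γ, ∀ v, IForm.sat I (tauRule opFun aggFun lt v R) :=
  (sat_tauProg opFun aggFun lt).1 ((IForm.sat_reduct_self _).1 h.1)

/-- Minimality of `I` applied to `I \ {a}` yields a rule instance supporting `a`. -/
theorem EGStable.tauSupported (h : EGStable opFun aggFun lt I Γ) :
    TauSupported opFun aggFun lt I Γ := by
  intro a ha
  have hJ : ¬ IForm.sat (I \ {a}) (IForm.reduct I (tauProg opFun aggFun lt Γ)) :=
    fun hJ => (h.2 _ Set.sdiff_subset hJ ▸ ha).2 rfl
  simp only [sat_reduct_tauProg, not_forall] at hJ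
  obtain ⟨R, hR, v, hRv⟩ := hJ
  have hI := EGStable.sat_tauRule opFun aggFun lt h R hR v
  rcases R.head.eq_empty_or with hhead | ⟨p, ts, hhead⟩
  · exact absurd (sat_reduct_tauRule_of_empty opFun aggFun lt hhead hI) hRv
  rw [sat_reduct_tauRule_iff opFun aggFun lt Set.sdiff_subset hhead hI] at hRv
  push Not at hRv
  obtain ⟨hbody, rs, hrs, hpI, hpJ⟩ := hRv
  obtain rfl : (p, rs) = a := by_contra fun hne => hpJ ⟨hpI, hne⟩
  exact ⟨R, hR, ts, hhead, v, hrs, IForm.sat_of_sat_reduct hbody⟩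

/-- Fages' argument, by well-founded induction along the dependency graph. -/
theorem egStable_of_tight (hfin : Γ.Finite) (htight : EGTight Γ)
    (hsat : ∀ R ∈ Γ, ∀ v, IForm.sat I (tauRule opFun aggFun lt v R))
    (hsupp : TauSupported opFun aggFun lt I Γ) : EGStable opFun aggFun lt I Γ := by
  refine ⟨(IForm.sat_reduct_self _).2 ((sat_tauProg opFun aggFun lt).2 hsat),
    fun J hJI hJ => hJI.antisymm ?_⟩
  rw [sat_reduct_tauProg] at hJ
  suffices ∀ s : C × ℕ, ∀ a ∈ I, (a.1, a.2.length) = s → a ∈ J from fun a ha => this _ a ha rfl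
  intro s
  induction s using (wellFounded_depEdge hfin htight).induction with
  | _ s ih =>
  rintro a ha rfl
  obtain ⟨R, hR, ts, hhead, v, hvals, hbody⟩ := hsupp a ha
  have hheadPred : R.head.hasPred a.1 a.2.length := by
    rcases hhead with h | h <;> rw [h] <;> exact ⟨rfl, (Term.length_of_vals opFun hvals).symm⟩
  have hJbody := sat_reduct_tauBody opFun aggFun lt hJI hbody fun e he b hb hbI =>
    ih _ ⟨R, hR, hheadPred, e, he, hb⟩ b hbI rfl
  exact (sat_reduct_tauRule_iff opFun aggFun lt hJI hhead (hsat R hR v)).1 (hJ R hR v) hJbody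
    a.2 hvals ha

end Stable

theorem definesB_iff {C O A : Type} [DecidableEq C] {p : C} {n : ℕ} {R : Rule C O A} :
    definesB p n R = true ↔
      ∃ ts, (R.head = .basic p ts ∨ R.head = .choice p ts) ∧ ts.length = n := by
  rcases R.head.eq_empty_or with h | ⟨q, ts, h | h⟩ <;> simp [definesB, h, and_comm]

section CompletedDefinitions
variable {C O A : Type} (opFun : O → List ℤ → Option ℤ)
  (aggFun : A → Set (List (Pre C)) → Pre C) (lt : Pre C → Pre C → Prop) (I : Interp C)

theorem sat_tauRule_iff_of_basic {v : Val C} {R : Rule C O A} {p : C} {ts : List (Term C O)}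
    (h : R.head = .basic p ts) :
    IForm.sat I (tauRule opFun aggFun lt v R) ↔
      (IForm.sat I (tauBody opFun aggFun lt v R.localList R.body) →
        ∀ rs, Term.vals opFun v ts rs → (p, rs) ∈ I) := by
  simp only [tauRule, h, IForm.sat, Subtype.forall]

theorem sat_tauRule_of_choice {v : Val C} {R : Rule C O A} {p : C} {ts : List (Term C O)}
    (h : R.head = .choice p ts) : IForm.sat I (tauRule opFun aggFun lt v R) := by
  simp only [tauRule, h]
  exact fun _ _ => IForm.sat_or.2 (em _)

theorem sat_phiConstraintRep_iff {v : Val C} {R : Rule C O A} (h : R.head = .empty) :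
    AFml.sat opFun aggFun lt I v (phiConstraintRep R) ↔
      IForm.sat I (tauRule opFun aggFun lt v R) := by
  simp only [phiConstraintRep, AFml.sat_negF, sat_phiBody opFun aggFun lt I R.nodup_localList,
    tauRule, h]
  rfl

/-- `∃U Fᵢ` is the disjunct contributed by `R` to the completed definition of `p`. -/
theorem sat_exList_ruleAnte {R : Rule C O A} {Vs : List ℕ}
    (hfresh : ∀ V ∈ Vs, V ∉ R.globalList) {p : C} {ts : List (Term C O)}
    (hhead : R.head = .basic p ts ∨ R.head = .choice p ts) (hlen : Vs.length = ts.length)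
    (u : Val C) :
    AFml.sat opFun aggFun lt I u (AFml.exList R.globalList (ruleAnte Vs R)) ↔
      (R.head = .choice p ts → (p, Vs.map u) ∈ I) ∧
        ∃ w, Term.vals opFun w ts (Vs.map u) ∧
          IForm.sat I (tauBody opFun aggFun lt w R.localList R.body) := by
  have hVs (ss : List (Pre C)) : Vs.map (updList u R.globalList ss) = Vs.map u :=
    List.map_congr_left fun V hV => updList_of_not_mem u ss (hfresh V hV)
  have hinst := exists_updList_iff (R.nodup_globalList) (u := u)
    (P := fun w => Term.vals opFun w ts (Vs.map u) ∧
      IForm.sat I (tauBody opFun aggFun lt w R.localList R.body))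
    fun w w' h => And.imp (Term.vals_congr opFun ts _ fun x hx => h x
      (Rule.mem_globalList_of_mem_head (by rcases hhead with h | h <;> rw [h] <;> exact hx))).1
      (tauBody_congr opFun aggFun lt I h).1
  rw [AFml.sat_exList opFun aggFun lt I R.nodup_globalList, ← hinst]
  rcases hhead with h | h <;>
    simp only [ruleAnte, h, AFml.sat_andF, sat_memConj opFun aggFun lt I _ hlen, hVs,
      AFml.sat_atom_map_var, sat_phiBody opFun aggFun lt I R.nodup_localList, reduceCtorEq,
      false_imp_iff, true_imp_iff, true_and]
  exact ⟨fun ⟨ss, hss, hts, hbody, hp⟩ => ⟨hp, ss, hss, hts, hbody⟩,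
    fun ⟨hp, ss, hss, hts, hbody⟩ => ⟨ss, hss, hts, hbody, hp⟩⟩

theorem sat_completedDef_iff [DecidableEq C] (Γ : List (Rule C O A)) (p : C) (n : ℕ) :
    (∀ v : Val C, AFml.sat opFun aggFun lt I v (completedDef Γ p n)) ↔
      ∀ rs : List (Pre C), rs.length = n →
        ((p, rs) ∈ I ↔ ∃ R ∈ Γ, ∃ ts,
          (R.head = .basic p ts ∨ (R.head = .choice p ts ∧ (p, rs) ∈ I)) ∧
          ∃ w, Term.vals opFun w ts rs ∧
            IForm.sat I (tauBody opFun aggFun lt w R.localList R.body)) := by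
  set Vs := (List.range n).map (· + freshVar (Γ.flatMap Rule.varList))
  have hVs : Vs.Nodup := nodup_range_map_add _ _
  have hlen : Vs.length = n := by simp [Vs]
  have hfresh : ∀ R ∈ Γ, ∀ V ∈ Vs, V ∉ R.globalList := fun R hR V hV hmem =>
    (le_of_mem_range_map_add hV).not_gt
      (lt_freshVar (List.mem_flatMap.2 ⟨R, hR, Rule.mem_varList_of_mem_globalList hmem⟩))
  have hdisj (u : Val C) :
      AFml.sat opFun aggFun lt I u (AFml.orList ((Γ.filter (definesB p n)).map
        fun R => AFml.exList R.globalList (ruleAnte Vs R))) ↔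
      ∃ R ∈ Γ, ∃ ts, (R.head = .basic p ts ∨ (R.head = .choice p ts ∧ (p, Vs.map u) ∈ I)) ∧
        ∃ w, Term.vals opFun w ts (Vs.map u) ∧
          IForm.sat I (tauBody opFun aggFun lt w R.localList R.body) := by
    rw [AFml.sat_orList]
    constructor
    · rintro ⟨_, hF, hsat⟩
      obtain ⟨R, hRf, rfl⟩ := List.mem_map.1 hF
      obtain ⟨hR, hdef⟩ := List.mem_filter.1 hRf
      obtain ⟨ts, hhead, hts⟩ := definesB_iff.1 hdef
      obtain ⟨hchoice, hinst⟩ := (sat_exList_ruleAnte opFun aggFun lt I (hfresh R hR) hhead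
        (hlen.trans hts.symm) u).1 hsat
      exact ⟨R, hR, ts, hhead.imp_right fun h => ⟨h, hchoice h⟩, hinst⟩
    · rintro ⟨R, hR, ts, hhead, w, hvals, hbody⟩
      have hhead' := hhead.imp_right And.left
      have hts : Vs.length = ts.length :=
        (List.length_map u).symm.trans (Term.length_of_vals opFun hvals)
      refine ⟨_, List.mem_map_of_mem
          (List.mem_filter.2 ⟨hR, definesB_iff.2 ⟨ts, hhead', hts ▸ hlen⟩⟩),
        (sat_exList_ruleAnte opFun aggFun lt I (hfresh R hR) hhead' hts u).2
          ⟨fun h => ?_, w, hvals, hbody⟩⟩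
      rcases hhead with h' | h'
      · exact absurd (h.symm.trans h') (by simp)
      · exact h'.2
  change (∀ v, AFml.sat opFun aggFun lt I v (AFml.allList Vs (AFml.iffF
    (AFml.atom p (Vs.map AArg.var)) (AFml.orList ((Γ.filter (definesB p n)).map
      fun R => AFml.exList R.globalList (ruleAnte Vs R)))))) ↔ _
  simp only [AFml.sat_allList opFun aggFun lt I hVs, AFml.sat_iffF, AFml.sat_atom_map_var, hdisj]
  refine ⟨fun h rs hrs => ?_, fun h v rs hrs => ?_⟩
  · simpa only [map_updList_self _ hVs (hrs.trans hlen.symm)] using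
      h (fun _ => .inf) rs (hrs.trans hlen.symm)
  · simpa only [map_updList_self _ hVs hrs] using h rs (hrs.trans hlen)

end CompletedDefinitions

theorem satCompletion_iff {C O A : Type} [DecidableEq C] (opFun : O → List ℤ → Option ℤ)
    (aggFun : A → Set (List (Pre C)) → Pre C) (lt : Pre C → Pre C → Prop)
    {Γ : List (Rule C O A)} {I : Interp C} (hvoc : I ⊆ vocab {R | R ∈ Γ}) :
    SatCompletion opFun aggFun lt Γ I ↔
      (∀ R ∈ Γ, ∀ v, IForm.sat I (tauRule opFun aggFun lt v R)) ∧
        TauSupported opFun aggFun lt I {R | R ∈ Γ} := by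
  have hdef {p : C} {n : ℕ} := sat_completedDef_iff opFun aggFun lt I Γ p n
  constructor
  · rintro ⟨hdefs, hcons⟩
    refine ⟨fun R hR v => ?_, fun a ha => ?_⟩
    · rcases R.head.eq_empty_or with h | ⟨p, ts, h | h⟩
      · exact (sat_phiConstraintRep_iff opFun aggFun lt I h).1 (hcons R hR h v)
      · refine (sat_tauRule_iff_of_basic opFun aggFun lt I h).2 fun hbody rs hrs => ?_
        have hocc : R.hasPredSym p ts.length := Or.inl (by rw [h]; exact ⟨rfl, rfl⟩)
        exact (hdef.1 (hdefs p _ ⟨R, hR, hocc⟩) rs (Term.length_of_vals opFun hrs)).2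
          ⟨R, hR, ts, Or.inl h, v, hrs, hbody⟩
      · exact sat_tauRule_of_choice opFun aggFun lt I h
    · obtain ⟨R, hR, ts, hhead, hinst⟩ := (hdef.1 (hdefs _ _ (hvoc ha)) a.2 rfl).1 ha
      exact ⟨R, hR, ts, hhead.imp_right And.left, hinst⟩
  · rintro ⟨hsat, hsupp⟩
    refine ⟨fun p n _ => hdef.2 fun rs _ => ⟨fun hp => ?_, ?_⟩,
      fun R hR h v => (sat_phiConstraintRep_iff opFun aggFun lt I h).2 (hsat R hR v)⟩
    · obtain ⟨R, hR, ts, hhead, hinst⟩ := hsupp _ hp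
      exact ⟨R, hR, ts, hhead.imp_right (⟨·, hp⟩), hinst⟩
    · rintro ⟨R, hR, ts, h | ⟨-, hp⟩, w, hvals, hbody⟩
      · exact (sat_tauRule_iff_of_basic opFun aggFun lt I h).1 (hsat R hR w) hbody rs hvals
      · exact hp

/-- Theorem 2: for any tight finite EG program `Γ`, an
interpretation `I` is a stable model of `Γ` iff `I` is contained in the
vocabulary of `Γ` and satisfies the completion of `Γ`. -/
theorem theorem_2 {C O A : Type} [DecidableEq C]
    (opFun : O → List ℤ → Option ℤ)
    (aggFun : A → Set (List (Pre C)) → Pre C)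
    (lt : Pre C → Pre C → Prop) (hlt : PreOrderOK lt)
    (Γ : List (Rule C O A)) (htight : EGTight {R | R ∈ Γ}) (I : Interp C) :
    EGStable opFun aggFun lt I {R | R ∈ Γ} ↔
      I ⊆ vocab {R | R ∈ Γ} ∧ SatCompletion opFun aggFun lt Γ I := by
  constructor
  · intro h
    have hvoc := EGStable.subset_vocab opFun aggFun lt h
    exact ⟨hvoc, (satCompletion_iff opFun aggFun lt hvoc).2
      ⟨EGStable.sat_tauRule opFun aggFun lt h, EGStable.tauSupported opFun aggFun lt h⟩⟩
  · rintro ⟨hvoc, hcomp⟩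
    obtain ⟨hsat, hsupp⟩ := (satCompletion_iff opFun aggFun lt hvoc).1 hcomp
    exact egStable_of_tight opFun aggFun lt Γ.finite_toSet htight hsat hsupp

end EG
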